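/- arXiv:1208.3054 — 8 statements merged into one kernel-verified Lean document; each statement's English description precedes it below -/
import Mathlib

section
/- For every finite simple connected undirected graph G on a nonempty vertex set V, there exists a Hamiltonian path in the graph G^3; that is, there is an ordering u_1, u_2, …, u_n of all vertices of V (each vertex appearing exactly once) such that dist_G(u_i, u_{i+1}) ≤ 3 for every 1 ≤ i < n. -/
/-!
Grow a spanning tree `T` of `G` one leaf at a time, recording it as an iterated *join*: `join t₁ t₂`
is `t₁` with the root of `t₂` hung below the root of `t₁`. By induction on the join structure,
`T^3` has a Hamiltonian path that starts at the root and ends at distance at most `1` from it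
(Sekanina–Karaganis): for `join t₁ t₂` traverse the path of `t₁` and then the path of `t₂`
backwards. The junction joins a vertex near `root t₁` to a vertex near `root t₂`, hence is a step
of length at most `1 + 1 + 1`, and the new path ends at `root t₂`, a neighbour of `root t₁`.
-/

lemma SimpleGraph.Connected.dist_le_three_of_adj {V : Type*} {G : SimpleGraph V} (hG : G.Connected)
    {a b u v : V} (hau : G.dist a u ≤ 1) (huv : G.Adj u v) (hvb : G.dist v b ≤ 1) :
    G.dist a b ≤ 3 := by
  have := hG.dist_triangle (u := a) (v := u) (w := b)
  have := hG.dist_triangle (u := u) (v := v) (w := b)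
  have := SimpleGraph.dist_eq_one_iff_adj.2 huv
  omega

inductive JoinTree (V : Type) : Type
  | single (a : V) : JoinTree V
  | join (t₁ t₂ : JoinTree V) : JoinTree V

namespace JoinTree

variable {V : Type}

def root : JoinTree V → V
  | single a => a
  | join t₁ _ => root t₁

def vertices : JoinTree V → List V
  | single a => [a]
  | join t₁ t₂ => vertices t₁ ++ vertices t₂

/-- Every edge of the tree, from the root of `t₁` to the root of `t₂` in each `join t₁ t₂`,
is an edge of `G`. -/
def IsSubgraph (G : SimpleGraph V) : JoinTree V → Prop
  | single _ => True
  | join t₁ t₂ => IsSubgraph G t₁ ∧ IsSubgraph G t₂ ∧ G.Adj (root t₁) (root t₂)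

lemma root_mem_vertices : ∀ t : JoinTree V, root t ∈ vertices t
  | single _ => List.mem_singleton_self _
  | join t₁ _ => List.mem_append_left _ (root_mem_vertices t₁)

theorem exists_cube_path {G : SimpleGraph V} (hG : G.Connected) :
    ∀ t : JoinTree V, IsSubgraph G t → ∃ l : List V, l.Perm (vertices t) ∧
      l.head? = some (root t) ∧ (∀ x ∈ l.getLast?, G.dist x (root t) ≤ 1) ∧
      l.IsChain (fun a b => G.dist a b ≤ 3)
  | single a, _ => ⟨[a], .refl _, rfl, by simp [root], .singleton a⟩
  | join t₁ t₂, ⟨h₁, h₂, hadj⟩ => by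
      obtain ⟨l₁, hp₁, hh₁, hl₁, hc₁⟩ := exists_cube_path hG t₁ h₁
      obtain ⟨l₂, hp₂, hh₂, hl₂, hc₂⟩ := exists_cube_path hG t₂ h₂
      have hne₁ : l₁ ≠ [] := by rintro rfl; simp at hh₁
      have hne₂ : l₂.reverse ≠ [] := by rintro h; simp_all
      refine ⟨l₁ ++ l₂.reverse, hp₁.append (l₂.reverse_perm.trans hp₂), ?_, ?_, ?_⟩
      · rwa [List.head?_append_of_ne_nil _ hne₁]
      · rw [List.getLast?_append_of_ne_nil _ hne₂, List.getLast?_reverse, hh₂]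
        simpa [root, SimpleGraph.dist_comm] using (SimpleGraph.dist_eq_one_iff_adj.2 hadj).le
      · refine hc₁.append (List.isChain_reverse.2 (hc₂.imp fun a b h => ?_)) fun a ha b hb => ?_
        · exact SimpleGraph.dist_comm.trans_le h
        · rw [List.head?_reverse] at hb
          exact hG.dist_le_three_of_adj (hl₁ a ha) hadj (SimpleGraph.dist_comm.trans_le (hl₂ b hb))

variable [DecidableEq V]

/-- `graft t x y` hangs the new leaf `y` below the vertex `x` of `t`. -/
def graft : JoinTree V → V → V → JoinTree V
  | single a, _, y => join (single a) (single y)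
  | join t₁ t₂, x, y =>
      if x ∈ vertices t₁ then join (graft t₁ x y) t₂ else join t₁ (graft t₂ x y)

lemma root_graft (t : JoinTree V) (x y : V) : root (graft t x y) = root t := by
  induction t with
  | single _ => rfl
  | join t₁ t₂ ih₁ =>
      by_cases h : x ∈ vertices t₁ <;> simp [graft, h, root, ih₁]

lemma vertices_graft_perm (t : JoinTree V) (x y : V) :
    (vertices (graft t x y)).Perm (y :: vertices t) := by
  induction t with
  | single _ => exact List.Perm.swap _ _ _
  | join t₁ t₂ ih₁ ih₂ =>
      by_cases h : x ∈ vertices t₁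
      · simpa [graft, h, vertices] using ih₁.append_right (vertices t₂)
      · simpa [graft, h, vertices] using (ih₂.append_left (vertices t₁)).trans List.perm_middle

lemma IsSubgraph.graft {G : SimpleGraph V} {t : JoinTree V} (ht : IsSubgraph G t) {x y : V}
    (hx : x ∈ vertices t) (hxy : G.Adj x y) : IsSubgraph G (graft t x y) := by
  induction t with
  | single a =>
      obtain rfl := List.mem_singleton.1 hx
      exact ⟨trivial, trivial, hxy⟩
  | join t₁ t₂ ih₁ ih₂ =>
      obtain ⟨h₁, h₂, hadj⟩ := ht
      by_cases h : x ∈ vertices t₁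
      · simp only [JoinTree.graft, h, if_pos]
        exact ⟨ih₁ h₁ h, h₂, by rwa [root_graft]⟩
      · have hx₂ : x ∈ vertices t₂ := (List.mem_append.1 hx).resolve_left h
        simp only [JoinTree.graft, h, if_false]
        exact ⟨h₁, ih₂ h₂ hx₂, by rwa [root_graft]⟩

variable [Fintype V]

theorem exists_isSubgraph_spanning {G : SimpleGraph V} (hG : G.Connected) (t : JoinTree V)
    (hnd : (vertices t).Nodup) (ht : IsSubgraph G t) :
    ∃ t' : JoinTree V, (vertices t').Nodup ∧ IsSubgraph G t' ∧ ∀ v, v ∈ vertices t' := by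
  by_cases hall : ∀ v, v ∈ vertices t
  · exact ⟨t, hnd, ht, hall⟩
  obtain ⟨y, hy⟩ := not_forall.1 hall
  obtain ⟨w⟩ := hG.preconnected (root t) y
  obtain ⟨d, -, hd_in, hd_out⟩ :=
    w.exists_boundary_dart {v | v ∈ vertices t} (root_mem_vertices t) hy
  have hperm := vertices_graft_perm t d.fst d.snd
  have hlt : (vertices t).length < Fintype.card V := (hnd.cons hd_out).length_le_card
  exact exists_isSubgraph_spanning hG (graft t d.fst d.snd) (hperm.nodup_iff.2 (hnd.cons hd_out))
    (ht.graft hd_in d.adj)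
termination_by Fintype.card V - (vertices t).length
decreasing_by
  have := hperm.length_eq
  simp only [List.length_cons] at this
  omega

end JoinTree

/-- Every finite connected graph `G` on a nonempty vertex set admits a
Hamiltonian path in `G^3`: an ordering of all the vertices (each appearing exactly once)
in which consecutive vertices are at distance at most `3` in `G`. -/
theorem hamiltonian_path_in_cube {V : Type} [Fintype V] [Nonempty V]
    (G : SimpleGraph V) (hG : G.Connected) :
    ∃ l : List V, l.Nodup ∧ (∀ v : V, v ∈ l) ∧
      l.Chain' (fun a b => G.dist a b ≤ 3) := by
  classical
  obtain ⟨r⟩ := ‹Nonempty V›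
  obtain ⟨t, hnd, ht, hall⟩ :=
    JoinTree.exists_isSubgraph_spanning hG (.single r) (List.nodup_singleton r) trivial
  obtain ⟨l, hperm, -, -, hchain⟩ := JoinTree.exists_cube_path hG t ht
  exact ⟨l, hperm.nodup_iff.2 hnd, fun v => hperm.mem_iff.2 (hall v), hchain⟩
end

section
/- For every finite simple connected undirected graph G on a nonempty vertex set V, there exists a set S ⊆ V that is an inclusionwise maximal independent set in G^2 (no two distinct vertices of S are at distance ≤ 2 in G, and every vertex of V is at distance ≤ 2 from some vertex of S) such that the induced subgraph G^3[S] is connected (the graph on S with edges between distinct s, s' ∈ S with dist_G(s, s') ≤ 3 is connected). -/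
/-!
Take `S` inclusion-maximal among the sets that are independent in `G^2` and induce a connected
subgraph of `G^3`; a singleton is such a set. If some vertex were at distance `≥ 3` from all of
`S`, then walking from it towards `S` along a shortest path, the distance to `S` drops by at most
one per step, so some vertex `w` is at distance exactly `3` from `S`. Adding `w` keeps `S`
independent in `G^2` and keeps `G^3[S]` connected, contradicting maximality.
-/

namespace SimpleGraph

variable {V : Type*}

/-- Since `G.dist` is `0` between different components, this is `G^k` only for connected `G`. -/
def distPower (G : SimpleGraph V) (k : ℕ) : SimpleGraph V :=
  fromRel fun u v => G.dist u v ≤ k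

theorem induce_distPower (G : SimpleGraph V) (k : ℕ) (S : Set V) :
    (G.distPower k).induce S = fromRel fun a b : S => G.dist (a : V) (b : V) ≤ k := by
  ext a b
  simp [distPower, Subtype.ext_iff]

theorem connected_induce_singleton (H : SimpleGraph V) (v : V) : (H.induce {v}).Connected :=
  connected_iff _ |>.mpr ⟨.of_subsingleton, inferInstance⟩

theorem Connected.induce_insert {H : SimpleGraph V} {S : Set V} {s v : V}
    (hS : (H.induce S).Connected) (hs : s ∈ S) (hvs : H.Adj v s) :
    (H.induce (insert v S)).Connected := by
  rw [← Set.singleton_union]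
  exact H.connected_induce_union (connected_induce_singleton H v).preconnected hS.preconnected
    rfl hs hvs

theorem exists_adj_dist_lt {G : SimpleGraph V} {u v : V} (h : G.dist u v ≠ 0) :
    ∃ w, G.Adj u w ∧ G.dist w v < G.dist u v := by
  obtain ⟨p, hp⟩ := exists_walk_of_dist_ne_zero h
  cases p with
  | nil => simp at h
  | cons hadj q =>
    refine ⟨_, hadj, ?_⟩
    rw [← hp, Walk.length_cons]
    exact Nat.lt_succ_of_le (G.dist_le q)

theorem Connected.exists_dist_eq_of_le_dist {G : SimpleGraph V} (hG : G.Connected) {S : Set V}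
    {s₀ : V} (hs₀ : s₀ ∈ S) {k : ℕ} {v : V} (hv : ∀ s ∈ S, k ≤ G.dist v s) :
    ∃ w, (∀ s ∈ S, k ≤ G.dist w s) ∧ ∃ s ∈ S, G.dist w s = k := by
  obtain ⟨n, hn⟩ : ∃ n, G.dist v s₀ ≤ k + n := ⟨G.dist v s₀, Nat.le_add_left _ _⟩
  induction n generalizing v with
  | zero => exact ⟨v, hv, s₀, hs₀, le_antisymm hn (hv s₀ hs₀)⟩
  | succ n ih =>
    by_cases hk : ∃ s ∈ S, G.dist v s = k
    · exact ⟨v, hv, hk⟩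
    push Not at hk
    have hv' : ∀ s ∈ S, k + 1 ≤ G.dist v s := fun s hs => (hv s hs).lt_of_ne' (hk s hs)
    have hne : G.dist v s₀ ≠ 0 := by have := hv' s₀ hs₀; omega
    obtain ⟨w, hvw, hw⟩ := exists_adj_dist_lt hne
    refine ih (v := w) (fun s hs => ?_) (by omega)
    have : k + 1 ≤ 1 + G.dist w s :=
      calc k + 1 ≤ G.dist v s := hv' s hs
        _ ≤ G.dist v w + G.dist w s := hG.dist_triangle
        _ = 1 + G.dist w s := by rw [dist_eq_one_iff_adj.mpr hvw]
    omega

end SimpleGraph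

open SimpleGraph

/-- Every finite connected graph `G` on a nonempty vertex set has an
inclusionwise maximal independent set `S` in `G^2` (distinct vertices of `S` are at
distance `> 2`, and every vertex is at distance `≤ 2` from some vertex of `S`) such that
the induced subgraph `G^3[S]` (edges between distinct `s, s' ∈ S` with
`dist_G(s, s') ≤ 3`) is connected. -/
theorem maximal_independent_set_cube_connected {V : Type} [Fintype V] [Nonempty V]
    (G : SimpleGraph V) (hG : G.Connected) :
    ∃ S : Set V,
      (∀ u ∈ S, ∀ v ∈ S, u ≠ v → 2 < G.dist u v) ∧
      (∀ v : V, ∃ s ∈ S, G.dist v s ≤ 2) ∧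
      (SimpleGraph.fromRel fun a b : S => G.dist (a : V) (b : V) ≤ 3).Connected := by
  obtain ⟨r⟩ := ‹Nonempty V›
  let IsCandidate (S : Set V) : Prop :=
    S.Pairwise (fun u v => 2 < G.dist u v) ∧ ((G.distPower 3).induce S).Connected
  obtain ⟨S, ⟨hpack, hconn⟩, hmax⟩ := (Set.toFinite {S | IsCandidate S}).exists_maximal
    ⟨{r}, Set.pairwise_singleton _ _, connected_induce_singleton _ r⟩
  refine ⟨S, hpack, fun v => ?_, induce_distPower G 3 S ▸ hconn⟩
  by_contra! hfar
  obtain ⟨⟨s₀, hs₀⟩⟩ := hconn.nonempty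
  obtain ⟨w, hwfar, s, hs, hws⟩ := hG.exists_dist_eq_of_le_dist hs₀ (k := 3) hfar
  have hcand : IsCandidate (insert w S) := by
    refine ⟨hpack.insert fun t ht _ => ⟨hwfar t ht, dist_comm (G := G) ▸ hwfar t ht⟩,
      hconn.induce_insert hs ⟨fun h => ?_, .inl hws.le⟩⟩
    simp [h] at hws
  have hwS : w ∈ S := hmax hcand (Set.subset_insert w S) (Set.mem_insert w S)
  simpa using hwfar w hwS
end

section
/- There exist a finite simple undirected graph G = (V, E), a uniform capacity function L (L(v) = 4 for all v ∈ V) and a positive integer k (namely k = 3, with G the disjoint union of two copies of the graph consisting of two adjacent vertices a, b together with 4 further vertices adjacent to both a and b) such that LP1 has a feasible solution, yet for every positive integer δ there is no capacitated k-center solution of G at distance δ. In particular LP1 has unbounded integrality gap, even for uniform capacities. -/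
/-- The LP relaxation LP1 of the capacitated `k`-center problem, at distance threshold `δ`
(a `δ`-feasible assignment).  `x u v` is the (fractional) amount of client `v` assigned to
center `u`, and `y u` is the (fractional) opening of a center at `u`.  Distances larger
than `δ`, in particular between vertices in different connected components, forbid any
assignment. -/
def LPFeasible {V : Type} [Fintype V] (G : SimpleGraph V) (L : V → ℕ) (k δ : ℕ)
    (x : V → V → ℝ) (y : V → ℝ) : Prop :=
  (∀ u v, 0 ≤ x u v) ∧ (∀ u, 0 ≤ y u) ∧
  (∑ u, y u = (k : ℝ)) ∧
  (∀ u v, x u v ≤ y u) ∧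
  (∀ u, ∑ v, x u v ≤ (L u : ℝ) * y u) ∧
  (∀ v, ∑ u, x u v = 1) ∧
  (∀ u, y u ≤ 1) ∧
  (∀ u v, ¬ (G.Reachable u v ∧ G.dist u v ≤ δ) → x u v = 0)

/-- A (hard) capacitated `k`-center solution of `G` at distance `δ`: a set `S` of exactly
`k` centers and an assignment `φ` of every vertex to a center of `S` at distance at most
`δ`, such that at most `L u` vertices are assigned to each center `u`. -/
def HasCapSolution {V : Type} (G : SimpleGraph V) (L : V → ℕ) (k δ : ℕ) : Prop :=
  ∃ (S : Finset V) (φ : V → V), S.card = k ∧ (∀ v, φ v ∈ S) ∧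
    (∀ v, G.Reachable v (φ v) ∧ G.dist v (φ v) ≤ δ) ∧
    (∀ u ∈ S, {v | φ v = u}.ncard ≤ L u)

/-- The graph used in Theorem 1 (unbounded integrality gap): two disjoint copies of the
graph consisting of two adjacent vertices (indices `0`, `1`) together with `4` further
vertices (indices `2,…,5`) adjacent to both of them. -/
def twoCopiesGraph : SimpleGraph (Fin 2 × Fin 6) where
  Adj p q := p.1 = q.1 ∧ p.2 ≠ q.2 ∧ (p.2.val ≤ 1 ∨ q.2.val ≤ 1)
  symm := by
    constructor
    intro p q h
    exact ⟨h.1.symm, h.2.1.symm, h.2.2.symm⟩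
  loopless := by
    constructor
    intro p h
    exact h.2.1 rfl

/-!
In the LP, each of the four hubs (the vertices `0, 1` of a copy) is opened to `3/4` and
serves half of every vertex of its copy; this uses exactly its capacity, `6 · 1/2 = 4 · 3/4`,
and the openings sum to `3`. An integral solution assigns every vertex inside its own
component, so with capacity `4` each copy of `6` vertices needs two centers: four in all.
-/

lemma twoCopiesGraph_reachable_fst_eq {p q : Fin 2 × Fin 6} (h : twoCopiesGraph.Reachable p q) :
    p.1 = q.1 := by
  obtain ⟨w⟩ := h
  induction w with
  | nil => rfl
  | cons hadj _ ih => exact hadj.1.trans ih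

lemma twoCopiesGraph_dist_le_one_of_hub {u v : Fin 2 × Fin 6} (hcopy : u.1 = v.1)
    (hhub : (u.2 : ℕ) ≤ 1) : twoCopiesGraph.Reachable u v ∧ twoCopiesGraph.dist u v ≤ 1 := by
  by_cases huv : u = v
  · subst huv
    simp
  · have hadj : twoCopiesGraph.Adj u v := ⟨hcopy, fun h => huv (Prod.ext hcopy h), Or.inl hhub⟩
    exact ⟨hadj.reachable, (SimpleGraph.dist_eq_one_iff_adj.mpr hadj).le⟩

noncomputable def twoCopiesX (u v : Fin 2 × Fin 6) : ℝ :=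
  if u.1 = v.1 ∧ (u.2 : ℕ) ≤ 1 then 1 / 2 else 0

noncomputable def twoCopiesY (u : Fin 2 × Fin 6) : ℝ := if (u.2 : ℕ) ≤ 1 then 3 / 4 else 0

lemma lpFeasible_twoCopies : LPFeasible twoCopiesGraph (fun _ => 4) 3 1 twoCopiesX twoCopiesY := by
  refine ⟨?_, ?_, ?_, ?_, ?_, ?_, ?_, ?_⟩
  · intro u v; unfold twoCopiesX; split <;> norm_num
  · intro u; unfold twoCopiesY; split <;> norm_num
  · norm_num [twoCopiesY, Fintype.sum_prod_type, Fin.sum_univ_succ]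
  · intro u v; unfold twoCopiesX twoCopiesY; split_ifs <;> grind
  · rintro ⟨i, a⟩
    fin_cases i <;> fin_cases a <;>
      norm_num [twoCopiesX, twoCopiesY, Fintype.sum_prod_type, Fin.sum_univ_succ]
  · rintro ⟨i, a⟩
    fin_cases i <;> norm_num [twoCopiesX, Fintype.sum_prod_type, Fin.sum_univ_succ]
  · intro u; unfold twoCopiesY; split <;> norm_num
  · intro u v h
    by_contra hx
    have hsupp : u.1 = v.1 ∧ (u.2 : ℕ) ≤ 1 := by
      by_contra hn; exact hx (if_neg hn)
    exact h (twoCopiesGraph_dist_le_one_of_hub hsupp.1 hsupp.2)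

lemma card_le_mul_card_filter_centers {V : Type} [Fintype V] {S : Finset V} {φ : V → V}
    {c : ℕ} (hmem : ∀ v, φ v ∈ S) (hcap : ∀ u ∈ S, {v | φ v = u}.ncard ≤ c)
    {T : Finset V} {p : V → Prop} [DecidablePred p] (hT : ∀ v ∈ T, p (φ v)) :
    T.card ≤ c * (S.filter p).card := by
  classical
  refine Finset.card_le_mul_card_image_of_maps_to
    (fun v hv => Finset.mem_filter.mpr ⟨hmem v, hT v hv⟩) c fun u hu => ?_
  calc (T.filter (φ · = u)).card ≤ (Finset.univ.filter (φ · = u)).card :=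
        Finset.card_le_card (Finset.filter_subset_filter _ (Finset.subset_univ T))
    _ = {v | φ v = u}.ncard := by rw [Set.ncard_eq_toFinset_card', Set.toFinset_ofPred]
    _ ≤ c := hcap u (Finset.mem_filter.mp hu).1

lemma not_hasCapSolution_twoCopies (δ : ℕ) :
    ¬ HasCapSolution twoCopiesGraph (fun _ => 4) 3 δ := by
  rintro ⟨S, φ, hcard, hmem, hreach, hcap⟩
  have hcopy (i : Fin 2) : 2 ≤ (S.filter (·.1 = i)).card := by
    have hsize : (Finset.univ.filter (fun v : Fin 2 × Fin 6 => v.1 = i)).card = 6 := by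
      fin_cases i <;> decide
    have hcount := card_le_mul_card_filter_centers hmem hcap (T := Finset.univ.filter (·.1 = i))
      (p := (·.1 = i))
      fun v hv => (twoCopiesGraph_reachable_fst_eq (hreach v).1).symm.trans
        (Finset.mem_filter.mp hv).2
    omega
  have hsplit : S.card = ∑ i : Fin 2, (S.filter (·.1 = i)).card :=
    Finset.card_eq_sum_card_fiberwise fun _ _ => Finset.mem_univ _
  rw [Fin.sum_univ_two] at hsplit
  have h₀ := hcopy 0
  have h₁ := hcopy 1
  omega

/-- For the graph `twoCopiesGraph`, uniform capacities `L ≡ 4` and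
`k = 3`, LP1 has a feasible solution, yet for every positive integer `δ` there is no
capacitated `k`-center solution at distance `δ`.  Hence LP1 has unbounded integrality
gap even for uniform capacities. -/
theorem lp_unbounded_integrality_gap :
    (∃ x y, LPFeasible twoCopiesGraph (fun _ => 4) 3 1 x y) ∧
    (∀ δ : ℕ, 0 < δ → ¬ HasCapSolution twoCopiesGraph (fun _ => 4) 3 δ) :=
  ⟨⟨_, _, lpFeasible_twoCopies⟩, fun δ _ => not_hasCapSolution_twoCopies δ⟩
end

section
/- Let G = (V, E) be a finite simple connected undirected graph, L : V → ℕ a capacity function and k a positive integer. If the soft LP relaxation has a 1-feasible solution, then there exist a multiplicity function m : V → ℕ with ∑_{v ∈ V} m(v) = k and a function φ : V → V such that m(φ(v)) ≥ 1 and dist_G(v, φ(v)) ≤ 11 for every v ∈ V, and |φ⁻¹(u)| ≤ L(u)·m(u) for every u ∈ V. In particular the integrality gap of the soft LP relaxation for connected graphs is at most 11. -/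
/-- The soft LP relaxation of the capacitated `k`-center problem at distance threshold `δ`
(no upper bound `y u ≤ 1`). -/
def SoftLPFeasible {V : Type} [Fintype V] (G : SimpleGraph V) (L : V → ℕ) (k δ : ℕ)
    (x : V → V → ℝ) (y : V → ℝ) : Prop :=
  (∀ u v, 0 ≤ x u v) ∧ (∀ u, 0 ≤ y u) ∧
  (∑ u, y u = (k : ℝ)) ∧
  (∀ u v, x u v ≤ y u) ∧
  (∀ u, ∑ v, x u v ≤ (L u : ℝ) * y u) ∧
  (∀ v, ∑ u, x u v = 1) ∧
  (∀ u v, ¬ (G.Reachable u v ∧ G.dist u v ≤ δ) → x u v = 0)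

/-- A soft capacitated `k`-center solution of `G` at distance `δ`: a multiplicity function
`m` opening `m u` centers at `u` with `k` centers in total, and an assignment `φ` of every
vertex to a vertex holding at least one center, at distance at most `δ`, such that at most
`L u * m u` vertices are assigned to `u`. -/
def HasSoftCapSolution {V : Type} [Fintype V] (G : SimpleGraph V) (L : V → ℕ) (k δ : ℕ) : Prop :=
  ∃ (m : V → ℕ) (φ : V → V), (∑ v, m v = k) ∧ (∀ v, 1 ≤ m (φ v)) ∧
    (∀ v, G.Reachable v (φ v) ∧ G.dist v (φ v) ≤ δ) ∧
    (∀ u, {v | φ v = u}.ncard ≤ L u * m u)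

/-!
Pick centers pairwise at distance at least `3`, greedily, so that each new center is at distance
exactly `3` from an earlier one; in a connected graph this ends with every vertex within distance
`2` of a center, and the centers form a tree whose edges have length at most `3`. Cluster the
vertices around their nearest center. The closed neighbourhood of a center lies in its cluster, so
the LP gives every cluster mass at least `1`. Round the masses from the leaves up: cluster `i`
adds its children's residues to its own mass, opens the integer part at the vertex of largest
capacity among its own and its children's clusters, and sends the fractional part, charged to its
own mass, to its parent; the residue at the root vanishes because `k` is an integer. Every unit of
opening thus moves at most `2 + 3 + 5 = 10` steps towards larger capacity. Composing the LP
assignment with this move gives a fractional assignment within distance `11` that respects the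
integral capacities `L u * m u`, and Hall's theorem makes it integral.
-/

open Finset

namespace SoftCapCenter

theorem exists_assignment_of_fractional {V W : Type*} [Fintype V] [Fintype W]
    [DecidableEq W] (cap : W → ℕ) (z : V → W → ℝ) (hz : ∀ v w, 0 ≤ z v w)
    (hrow : ∀ v, ∑ w, z v w = 1) (hcol : ∀ w, ∑ v, z v w ≤ cap w) :
    ∃ φ : V → W, (∀ v, z v (φ v) ≠ 0) ∧ ∀ w, {v | φ v = w}.ncard ≤ cap w := by
  classical
  let supp (v : V) : Finset W := {w | z v w ≠ 0}
  -- a vertex `w` offers `cap w` slots `⟨w, t⟩`, `t < cap w`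
  let slots (v : V) : Finset (Σ _ : W, ℕ) := (supp v).sigma fun w => range (cap w)
  have hall (A : Finset V) : #A ≤ #(A.biUnion slots) := by
    set S := A.biUnion supp
    have hslots : A.biUnion slots = S.sigma fun w => range (cap w) := by
      ext ⟨w, t⟩
      simp only [slots, S, mem_biUnion, mem_sigma]
      tauto
    rw [hslots, card_sigma]
    simp only [card_range]
    have hout : ∀ v ∈ A, ∀ w ∉ S, z v w = 0 := fun v hv w hw => by
      by_contra h
      exact hw (mem_biUnion.2 ⟨v, hv, by simpa [supp] using h⟩)
    have : (#A : ℝ) ≤ ∑ w ∈ S, (cap w : ℝ) :=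
      calc (#A : ℝ) = ∑ v ∈ A, ∑ w, z v w := by simp [hrow]
        _ = ∑ v ∈ A, ∑ w ∈ S, z v w := sum_congr rfl fun v hv =>
            (sum_subset (subset_univ S) fun w _ hw => hout v hv w hw).symm
        _ = ∑ w ∈ S, ∑ v ∈ A, z v w := sum_comm
        _ ≤ ∑ w ∈ S, ∑ v, z v w := sum_le_sum fun w _ =>
            sum_le_sum_of_subset_of_nonneg (subset_univ A) fun v _ _ => hz v w
        _ ≤ ∑ w ∈ S, (cap w : ℝ) := sum_le_sum fun w _ => hcol w
    exact_mod_cast this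
  obtain ⟨f, hf_inj, hf_mem⟩ := (all_card_le_biUnion_card_iff_exists_injective slots).1 hall
  have hf (v : V) : z v (f v).1 ≠ 0 ∧ (f v).2 < cap (f v).1 := by
    simpa [slots, supp] using hf_mem v
  refine ⟨fun v => (f v).1, fun v => (hf v).1, fun w => ?_⟩
  calc {v | (f v).1 = w}.ncard ≤ (Set.Iio (cap w)).ncard := by
        refine Set.ncard_le_ncard_of_injOn (fun v => (f v).2) ?_ ?_ (Set.finite_Iio _)
        · rintro v rfl
          exact (hf v).2
        · rintro a rfl b hb hab
          exact hf_inj (Sigma.ext hb.symm (heq_of_eq hab))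
    _ = cap w := Set.ncard_Iio_nat _

variable {V : Type*} {G : SimpleGraph V}

theorem exists_dist_eq_of_le_dist (hG : G.Connected) {r : ℕ} {S : Finset V} (hS : S.Nonempty)
    {v : V} (hv : ∀ s ∈ S, r ≤ G.dist s v) :
    ∃ w, (∀ s ∈ S, r ≤ G.dist s w) ∧ ∃ s ∈ S, G.dist s w = r := by
  obtain ⟨s, hs, hmin⟩ := S.exists_min_image (G.dist · v) hS
  obtain ⟨p, hp⟩ := hG.exists_walk_length_eq_dist s v
  -- `w` is the vertex at distance `r` from `s` on a geodesic from `s` to `v`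
  have hsw : G.dist s (p.getVert r) ≤ r :=
    (SimpleGraph.dist_le (p.take r)).trans (by simp)
  have hwv : G.dist (p.getVert r) v ≤ G.dist s v - r :=
    (SimpleGraph.dist_le (p.drop r)).trans (by simp [hp])
  have hfar (s' : V) (hs' : s' ∈ S) : r ≤ G.dist s' (p.getVert r) := by
    have := hG.dist_triangle (u := s') (v := p.getVert r) (w := v)
    have := hmin s' hs'
    have := hv s hs
    omega
  exact ⟨p.getVert r, hfar, s, hs, le_antisymm hsw (hfar s hs)⟩

def IsSeparatedChain (G : SimpleGraph V) (r : ℕ) (s : ℕ → V) (n : ℕ) : Prop :=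
  (∀ i j, i < j → j < n → r ≤ G.dist (s i) (s j)) ∧
    ∀ j, 0 < j → j < n → ∃ i < j, G.dist (s i) (s j) ≤ r

theorem isSeparatedChain_one (r : ℕ) (v : V) : IsSeparatedChain G r (fun _ => v) 1 :=
  ⟨fun _ _ _ _ => by omega, fun _ _ _ => by omega⟩

theorem IsSeparatedChain.snoc {r n : ℕ} {s : ℕ → V} (hs : IsSeparatedChain G r s n) {w : V}
    (hfar : ∀ i < n, r ≤ G.dist (s i) w) (hnear : ∃ i < n, G.dist (s i) w ≤ r) :
    IsSeparatedChain G r (Function.update s n w) (n + 1) := by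
  have hlt {i : ℕ} (hi : i < n) : Function.update s n w i = s i :=
    Function.update_of_ne hi.ne _ _
  refine ⟨fun i j hij hj => ?_, fun j hj0 hj => ?_⟩
  · rcases (Nat.lt_succ_iff_lt_or_eq.1 hj) with hj | rfl
    · rw [hlt hj, hlt (hij.trans hj)]
      exact hs.1 i j hij hj
    · rw [hlt hij, Function.update_self]
      exact hfar i hij
  · rcases (Nat.lt_succ_iff_lt_or_eq.1 hj) with hj | rfl
    · obtain ⟨i, hij, hd⟩ := hs.2 j hj0 hj
      exact ⟨i, hij, by rwa [hlt hj, hlt (hij.trans hj)]⟩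
    · obtain ⟨i, hi, hd⟩ := hnear
      exact ⟨i, hi, by rwa [hlt hi, Function.update_self]⟩

theorem IsSeparatedChain.le_dist_of_ne {r n : ℕ} {s : ℕ → V} (hs : IsSeparatedChain G r s n)
    {i j : ℕ} (hi : i < n) (hj : j < n) (hij : i ≠ j) : r ≤ G.dist (s i) (s j) := by
  rcases Nat.lt_or_gt_of_ne hij with h | h
  · exact hs.1 i j h hj
  · rw [SimpleGraph.dist_comm]
    exact hs.1 j i h hi

theorem IsSeparatedChain.le_card [Fintype V] {r n : ℕ} {s : ℕ → V}
    (hs : IsSeparatedChain G r s n) (hr : 0 < r) : n ≤ Fintype.card V := by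
  have hinj : Set.InjOn s (range n) := by
    intro i hi j hj hij
    by_contra hne
    have := hs.le_dist_of_ne (mem_range.1 hi) (mem_range.1 hj) hne
    rw [hij, SimpleGraph.dist_self] at this
    omega
  simpa using card_le_card_of_injOn s (fun _ _ => mem_univ _) hinj

/-- A maximal separated chain covers the graph: otherwise it could be extended by a vertex
given by `exists_dist_eq_of_le_dist`. -/
theorem exists_separatedChain_covering [Fintype V] (hG : G.Connected) {r : ℕ} (hr : 0 < r) :
    ∃ (s : ℕ → V) (n : ℕ), 0 < n ∧ IsSeparatedChain G r s n ∧
      ∀ v, ∃ i < n, G.dist (s i) v < r := by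
  classical
  let P (n : ℕ) : Prop := 0 < n ∧ ∃ s, IsSeparatedChain G r s n
  have hP1 : P 1 := ⟨one_pos, _, isSeparatedChain_one r hG.nonempty.some⟩
  set n := Nat.findGreatest P (Fintype.card V)
  obtain ⟨hn, s, hs⟩ : P n := Nat.findGreatest_spec (Fintype.card_pos_iff.2 hG.nonempty) hP1
  refine ⟨s, n, hn, hs, fun v => ?_⟩
  by_contra! hv
  have hS : ((range n).image s).Nonempty := (nonempty_range_iff.2 hn.ne').image s
  obtain ⟨w, hfar, hnear⟩ := exists_dist_eq_of_le_dist hG hS (v := v) (by simpa using hv)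
  simp only [mem_image, mem_range, forall_exists_index, and_imp, forall_apply_eq_imp_iff₂,
    exists_exists_and_eq_and] at hfar hnear
  obtain ⟨i, hi, hd⟩ := hnear
  have hext := hs.snoc hfar ⟨i, hi, hd.le⟩
  exact Nat.findGreatest_is_greatest (Nat.lt_succ_self n) (hext.le_card hr)
    ⟨n.succ_pos, _, hext⟩

structure Clustering (G : SimpleGraph V) where
  n : ℕ
  center : ℕ → V
  cluster : V → ℕ
  parent : ℕ → ℕ
  cluster_lt (u : V) : cluster u < n
  dist_center_cluster_le (u : V) : G.dist (center (cluster u)) u ≤ 2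
  cluster_eq_of_dist_le_one {i : ℕ} {u : V} :
    i < n → G.dist (center i) u ≤ 1 → cluster u = i
  parent_lt {j : ℕ} : 0 < j → j < n → parent j < j
  dist_center_parent_le {j : ℕ} : 0 < j → j < n → G.dist (center (parent j)) (center j) ≤ 3

/-- The clusters are the Voronoi cells of a covering separated chain with `r = 3`. -/
theorem exists_clustering [Fintype V] (hG : G.Connected) : Nonempty (Clustering G) := by
  obtain ⟨s, n, hn, hs, hcover⟩ := exists_separatedChain_covering hG (r := 3) three_pos
  have hparent (j : ℕ) : ∃ i, 0 < j → j < n → i < j ∧ G.dist (s i) (s j) ≤ 3 := by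
    by_cases h : 0 < j ∧ j < n
    · obtain ⟨i, hij, hd⟩ := hs.2 j h.1 h.2
      exact ⟨i, fun _ _ => ⟨hij, hd⟩⟩
    · exact ⟨0, fun h0 hj => absurd ⟨h0, hj⟩ h⟩
  choose parent hparent using hparent
  choose cluster hcluster hmin using fun v =>
    (range n).exists_min_image (fun i => G.dist (s i) v) (nonempty_range_iff.2 hn.ne')
  refine ⟨⟨n, s, cluster, parent, fun u => mem_range.1 (hcluster u), fun u => ?_,
    fun {i u} hi hd => ?_, fun h0 hj => (hparent _ h0 hj).1, fun h0 hj => (hparent _ h0 hj).2⟩⟩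
  · obtain ⟨i, hi, hd⟩ := hcover u
    have := hmin u i (mem_range.2 hi)
    omega
  · by_contra hne
    have hsep := hs.le_dist_of_ne hi (mem_range.1 (hcluster u)) (Ne.symm hne)
    have := hmin u i (mem_range.2 hi)
    have := hG.dist_triangle (u := s i) (v := u) (w := s (cluster u))
    rw [SimpleGraph.dist_comm (u := u)] at this
    omega

section TreeRounding

variable (n : ℕ) (parent : ℕ → ℕ) (Y : ℕ → ℝ)

def children (i : ℕ) : Finset ℕ := {j ∈ range n | i < j ∧ parent j = i}

noncomputable def residue (i : ℕ) : ℝ :=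
  Int.fract (Y i + ∑ j ∈ (children n parent i).attach, residue j)
termination_by n - i
decreasing_by
  have := (mem_filter.1 j.2)
  rw [mem_range] at this
  omega

theorem residue_eq (i : ℕ) :
    residue n parent Y i =
      Int.fract (Y i + ∑ j ∈ children n parent i, residue n parent Y j) := by
  rw [residue, sum_attach (children n parent i) (residue n parent Y)]

theorem residue_nonneg (i : ℕ) : 0 ≤ residue n parent Y i := by
  rw [residue_eq]
  exact Int.fract_nonneg _

theorem residue_lt_one (i : ℕ) : residue n parent Y i < 1 := by
  rw [residue_eq]
  exact Int.fract_lt_one _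

variable {n parent}

theorem sum_sum_children {M : Type*} [AddCommMonoid M]
    (hparent : ∀ {j}, 0 < j → j < n → parent j < j) (hn : 0 < n) (f : ℕ → M) :
    ∑ i ∈ range n, ∑ j ∈ children n parent i, f j + f 0 = ∑ i ∈ range n, f i := by
  have hmaps : ∀ j ∈ (range n).erase 0, parent j ∈ range n := fun j hj => by
    obtain ⟨hj0, hj⟩ := mem_erase.1 hj
    exact mem_range.2 ((hparent (Nat.pos_of_ne_zero hj0) (mem_range.1 hj)).trans
      (mem_range.1 hj))
  rw [← sum_erase_add (range n) f (mem_range.2 hn), ← sum_fiberwise_of_maps_to hmaps f]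
  congr 1
  refine sum_congr rfl fun i _ => sum_congr ?_ fun _ _ => rfl
  ext j
  simp only [children, mem_filter, mem_range, mem_erase]
  constructor
  · rintro ⟨hj, hij, rfl⟩
    exact ⟨⟨by omega, hj⟩, rfl⟩
  · rintro ⟨⟨hj0, hj⟩, rfl⟩
    exact ⟨hj, hparent (Nat.pos_of_ne_zero hj0) hj, rfl⟩

theorem residue_zero (hparent : ∀ {j}, 0 < j → j < n → parent j < j) (hn : 0 < n) {k : ℤ}
    (hY : ∑ i ∈ range n, Y i = k) : residue n parent Y 0 = 0 := by
  set ρ := residue n parent Y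
  set T : ℕ → ℝ := fun i => Y i + ∑ j ∈ children n parent i, ρ j
  -- summing `⌊T i⌋ = T i - ρ i` over all nodes, each residue but the root's cancels
  have hfloor : ∑ i ∈ range n, (⌊T i⌋ : ℝ) = k - ρ 0 := by
    simp only [T, ← Int.self_sub_fract, sum_sub_distrib, sum_add_distrib, hY]
    simp only [ρ, ← residue_eq]
    rw [← sum_sum_children hparent hn ρ]
    ring
  have hint : ρ 0 = ((k - ∑ i ∈ range n, ⌊T i⌋ : ℤ) : ℝ) := by
    push_cast
    linarith
  have hρ : ρ 0 = Int.fract (T 0) := residue_eq n parent Y 0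
  rw [hρ, ← Int.fract_fract, ← hρ, hint, Int.fract_intCast]

end TreeRounding

namespace Clustering

variable [Fintype V] (C : Clustering G) (L : V → ℕ) (y : V → ℝ)

noncomputable def mass (i : ℕ) : ℝ := ∑ u with C.cluster u = i, y u

def family (i : ℕ) : Finset V :=
  {u | C.cluster u = i ∨ C.cluster u ∈ children C.n C.parent i}

noncomputable def residue (i : ℕ) : ℝ := SoftCapCenter.residue C.n C.parent (C.mass y) i

noncomputable def load (i : ℕ) : ℝ :=
  C.mass y i + ∑ j ∈ children C.n C.parent i, C.residue y j

theorem mem_family_cluster (u : V) : u ∈ C.family (C.cluster u) := by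
  simp [family]

theorem mem_family_parent {u : V} (hu : 0 < C.cluster u) :
    u ∈ C.family (C.parent (C.cluster u)) := by
  simp [family, children, C.cluster_lt u, C.parent_lt hu (C.cluster_lt u)]

theorem dist_center_le_of_mem_family (hG : G.Connected) {i : ℕ} {u : V}
    (hu : u ∈ C.family i) : G.dist (C.center i) u ≤ 5 := by
  have hcl := C.dist_center_cluster_le u
  rcases (mem_filter.1 hu).2 with rfl | hch
  · omega
  · obtain ⟨hj, hij, hpar⟩ := mem_filter.1 hch
    have := C.dist_center_parent_le (by omega) (mem_range.1 hj)
    have := hG.dist_triangle (u := C.center i) (v := C.center (C.cluster u)) (w := u)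
    rw [hpar] at *
    omega

theorem one_le_mass (hy0 : ∀ u, 0 ≤ y u) (hball : ∀ v, 1 ≤ ∑ u with G.dist v u ≤ 1, y u)
    {i : ℕ} (hi : i < C.n) : 1 ≤ C.mass y i :=
  (hball (C.center i)).trans <| sum_le_sum_of_subset_of_nonneg
    (fun u hu => by simpa using C.cluster_eq_of_dist_le_one hi (mem_filter.1 hu).2)
    fun u _ _ => hy0 u

theorem sum_mass : ∑ i ∈ range C.n, C.mass y i = ∑ u, y u :=
  sum_fiberwise_of_maps_to (fun u _ => mem_range.2 (C.cluster_lt u)) y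

theorem residue_nonneg (i : ℕ) : 0 ≤ C.residue y i := SoftCapCenter.residue_nonneg ..

theorem residue_lt_one (i : ℕ) : C.residue y i < 1 := SoftCapCenter.residue_lt_one ..

theorem residue_zero (hn : 0 < C.n) {k : ℕ} (hsum : ∑ u, y u = k) : C.residue y 0 = 0 :=
  SoftCapCenter.residue_zero _ C.parent_lt hn (k := k) (by rw [sum_mass, hsum]; norm_cast)

theorem floor_load (hy0 : ∀ u, 0 ≤ y u) (i : ℕ) :
    (⌊C.load y i⌋₊ : ℝ) = C.load y i - C.residue y i := by
  have hload : 0 ≤ C.load y i := add_nonneg (sum_nonneg fun u _ => hy0 u)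
    (sum_nonneg fun j _ => C.residue_nonneg y j)
  rw [natCast_floor_eq_intCast_floor hload, ← Int.self_sub_fract, residue,
    SoftCapCenter.residue_eq]
  rfl

variable [DecidableEq V]

/-- Adding `center i` only makes the maximum exist for every `i`: for `i < n` the center lies in
its own cluster. -/
noncomputable def host (i : ℕ) : V :=
  (exists_max_image (insert (C.center i) (C.family i)) L (insert_nonempty _ _)).choose

noncomputable def share (i : ℕ) (w : V) : ℝ :=
  (if C.host L i = w then 1 - C.residue y i / C.mass y i else 0) +
    (if C.host L (C.parent i) = w then C.residue y i / C.mass y i else 0)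

noncomputable def multiplicity (w : V) : ℕ :=
  ∑ i ∈ range C.n with C.host L i = w, ⌊C.load y i⌋₊

theorem host_eq_or_mem (i : ℕ) : C.host L i = C.center i ∨ C.host L i ∈ C.family i :=
  mem_insert.1 (exists_max_image _ L (insert_nonempty _ _)).choose_spec.1

theorem le_host {i : ℕ} {u : V} (hu : u ∈ C.family i) : L u ≤ L (C.host L i) :=
  (exists_max_image _ L (insert_nonempty _ _)).choose_spec.2 u (mem_insert_of_mem hu)

theorem dist_center_host_le (hG : G.Connected) (i : ℕ) :
    G.dist (C.center i) (C.host L i) ≤ 5 := by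
  rcases C.host_eq_or_mem L i with h | h
  · simp [h]
  · exact C.dist_center_le_of_mem_family hG h

theorem share_nonneg (hy0 : ∀ u, 0 ≤ y u) (hball : ∀ v, 1 ≤ ∑ u with G.dist v u ≤ 1, y u)
    {i : ℕ} (hi : i < C.n) (w : V) : 0 ≤ C.share L y i w := by
  have hmass := C.one_le_mass y hy0 hball hi
  have : C.residue y i / C.mass y i ≤ 1 :=
    div_le_one_of_le₀ ((C.residue_lt_one y i).le.trans hmass) (by linarith)
  have := div_nonneg (C.residue_nonneg y i) (by linarith : 0 ≤ C.mass y i)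
  unfold share
  split_ifs <;> linarith

theorem sum_share (i : ℕ) : ∑ w, C.share L y i w = 1 := by
  simp [share, sum_add_distrib]

theorem mass_mul_share {i : ℕ} (hi : C.mass y i ≠ 0) (w : V) :
    C.mass y i * C.share L y i w =
      (if C.host L i = w then C.mass y i - C.residue y i else 0) +
        (if C.host L (C.parent i) = w then C.residue y i else 0) := by
  unfold share
  split_ifs <;> field_simp <;> ring

theorem sum_residue_host_parent (hn : 0 < C.n) {k : ℕ} (hsum : ∑ u, y u = k) (w : V) :
    ∑ i ∈ range C.n, (if C.host L (C.parent i) = w then C.residue y i else 0) =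
      ∑ i ∈ range C.n, if C.host L i = w then ∑ j ∈ children C.n C.parent i, C.residue y j
        else 0 := by
  rw [← sum_sum_children C.parent_lt hn, C.residue_zero y hn hsum, ite_self, add_zero]
  refine sum_congr rfl fun i _ => ?_
  calc _ = ∑ j ∈ children C.n C.parent i, if C.host L i = w then C.residue y j else 0 :=
        sum_congr rfl fun j hj => by rw [(mem_filter.1 hj).2.2]
    _ = _ := by rw [sum_ite_irrel, sum_const_zero]

theorem sum_mul_share (hy0 : ∀ u, 0 ≤ y u) (hball : ∀ v, 1 ≤ ∑ u with G.dist v u ≤ 1, y u)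
    {k : ℕ} (hsum : ∑ u, y u = k) (w : V) :
    ∑ u, y u * C.share L y (C.cluster u) w = C.multiplicity L y w := by
  have hn : 0 < C.n := (C.cluster_lt w).pos
  calc ∑ u, y u * C.share L y (C.cluster u) w
      = ∑ i ∈ range C.n, C.mass y i * C.share L y i w := by
        rw [← sum_fiberwise_of_maps_to (fun u _ => mem_range.2 (C.cluster_lt u))]
        refine sum_congr rfl fun i _ => ?_
        rw [mass, sum_mul]
        exact sum_congr rfl fun u hu => by rw [(mem_filter.1 hu).2]
    _ = ∑ i ∈ range C.n, ((if C.host L i = w then C.mass y i - C.residue y i else 0) +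
          (if C.host L (C.parent i) = w then C.residue y i else 0)) :=
        sum_congr rfl fun i hi => C.mass_mul_share L y
          (zero_lt_one.trans_le (C.one_le_mass y hy0 hball (mem_range.1 hi))).ne' w
    _ = ∑ i ∈ range C.n, if C.host L i = w then C.load y i - C.residue y i else 0 := by
        rw [sum_add_distrib, C.sum_residue_host_parent L y hn hsum, ← sum_add_distrib]
        refine sum_congr rfl fun i _ => ?_
        split_ifs
        · rw [load]; ring
        · simp
    _ = C.multiplicity L y w := by
        simp [multiplicity, sum_filter, C.floor_load y hy0]

theorem exists_family_of_share_ne_zero (hn : 0 < C.n) {k : ℕ} (hsum : ∑ u, y u = k)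
    {u w : V} (h : C.share L y (C.cluster u) w ≠ 0) : ∃ i, u ∈ C.family i ∧ C.host L i = w := by
  by_cases hhost : C.host L (C.cluster u) = w
  · exact ⟨_, C.mem_family_cluster u, hhost⟩
  by_cases hpar : C.host L (C.parent (C.cluster u)) = w
  · refine ⟨_, C.mem_family_parent (Nat.pos_of_ne_zero fun h0 => h ?_), hpar⟩
    rw [h0] at hhost ⊢
    simp [share, hhost, C.residue_zero y hn hsum]
  · simp [share, hhost, hpar] at h

end Clustering

/-- `c u ·` spreads the opening `y u` over vertices of no smaller capacity within distance `D`,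
so that each `w` receives the integer amount `m w`. -/
structure IsCapRounding [Fintype V] (G : SimpleGraph V) (L : V → ℕ) (y : V → ℝ) (D : ℕ)
    (m : V → ℕ) (c : V → V → ℝ) : Prop where
  nonneg (u w : V) : 0 ≤ c u w
  sum_eq_one (u : V) : ∑ w, c u w = 1
  sum_mul_eq (w : V) : ∑ u, y u * c u w = m w
  le_of_ne_zero {u w : V} : c u w ≠ 0 → L u ≤ L w ∧ G.dist u w ≤ D

theorem exists_isCapRounding [Fintype V] (hG : G.Connected) (L : V → ℕ) {y : V → ℝ}
    (hy0 : ∀ u, 0 ≤ y u) {k : ℕ} (hsum : ∑ u, y u = k)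
    (hball : ∀ v, 1 ≤ ∑ u with G.dist v u ≤ 1, y u) :
    ∃ m c, IsCapRounding G L y 10 m c := by
  classical
  obtain ⟨C⟩ := exists_clustering hG
  refine ⟨C.multiplicity L y, fun u w => C.share L y (C.cluster u) w,
    ⟨fun u w => C.share_nonneg L y hy0 hball (C.cluster_lt u) w, fun u => C.sum_share L y _,
    C.sum_mul_share L y hy0 hball hsum, fun {u w} h => ?_⟩⟩
  obtain ⟨i, hu, rfl⟩ := C.exists_family_of_share_ne_zero L y (C.cluster_lt u).pos hsum h
  refine ⟨C.le_host L hu, ?_⟩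
  have := C.dist_center_le_of_mem_family hG hu
  have := C.dist_center_host_le L hG i
  have := hG.dist_triangle (u := u) (v := C.center i) (w := C.host L i)
  rw [SimpleGraph.dist_comm (u := u) (v := C.center i)] at this
  omega

namespace IsCapRounding

variable [Fintype V] {L : V → ℕ} {y : V → ℝ} {D : ℕ} {m : V → ℕ} {c : V → V → ℝ}
  (h : IsCapRounding G L y D m c) (x : V → V → ℝ)

include h

theorem sum_cast_eq : ∑ w, (m w : ℝ) = ∑ u, y u := by
  simp_rw [← h.sum_mul_eq]
  rw [sum_comm]
  simp [← mul_sum, h.sum_eq_one]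

theorem one_le_of_ne_zero (hy0 : ∀ u, 0 ≤ y u) {u w : V} (hu : 0 < y u) (hc : c u w ≠ 0) :
    1 ≤ m w := by
  have : 0 < (m w : ℝ) := h.sum_mul_eq w ▸ (mul_pos hu ((h.nonneg u w).lt_of_ne' hc)).trans_le
    (single_le_sum (fun u _ => mul_nonneg (hy0 u) (h.nonneg u w)) (mem_univ u))
  exact_mod_cast this

theorem sum_sum_mul_eq_one (hdem : ∀ v, ∑ u, x u v = 1) (v : V) :
    ∑ w, ∑ u, x u v * c u w = 1 := by
  rw [sum_comm]
  simp [← mul_sum, h.sum_eq_one, hdem]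

theorem sum_sum_mul_le (hy0 : ∀ u, 0 ≤ y u) (hcap : ∀ u, ∑ v, x u v ≤ L u * y u) (w : V) :
    ∑ v, ∑ u, x u v * c u w ≤ L w * m w :=
  calc ∑ v, ∑ u, x u v * c u w = ∑ u, (∑ v, x u v) * c u w := by
        rw [sum_comm]
        simp [sum_mul]
    _ ≤ ∑ u, L w * (y u * c u w) := sum_le_sum fun u _ => by
        by_cases hc : c u w = 0
        · simp [hc]
        have hL : (L u : ℝ) ≤ L w := by exact_mod_cast (h.le_of_ne_zero hc).1
        calc (∑ v, x u v) * c u w ≤ (L u * y u) * c u w :=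
              mul_le_mul_of_nonneg_right (hcap u) (h.nonneg u w)
          _ ≤ L w * (y u * c u w) := by
              rw [mul_assoc]
              exact mul_le_mul_of_nonneg_right hL (mul_nonneg (hy0 u) (h.nonneg u w))
    _ = L w * m w := by rw [← mul_sum, h.sum_mul_eq]

end IsCapRounding

end SoftCapCenter

theorem SoftLPFeasible.dist_le_of_ne_zero {V : Type} [Fintype V] {G : SimpleGraph V}
    {L : V → ℕ} {k δ : ℕ} {x : V → V → ℝ} {y : V → ℝ} (h : SoftLPFeasible G L k δ x y)
    {u v : V} (hx : x u v ≠ 0) : G.dist u v ≤ δ := by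
  by_contra hfar
  exact hx (h.2.2.2.2.2.2 u v fun h' => hfar h'.2)

theorem SoftLPFeasible.one_le_sum {V : Type} [Fintype V] {G : SimpleGraph V}
    {L : V → ℕ} {k δ : ℕ} {x : V → V → ℝ} {y : V → ℝ} (h : SoftLPFeasible G L k δ x y)
    (v : V) : 1 ≤ ∑ u with G.dist v u ≤ δ, y u :=
  calc 1 = ∑ u, x u v := (h.2.2.2.2.2.1 v).symm
    _ = ∑ u with G.dist v u ≤ δ, x u v := (sum_filter_of_ne fun u _ hx => by
        rw [SimpleGraph.dist_comm]
        exact h.dist_le_of_ne_zero hx).symm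
    _ ≤ ∑ u with G.dist v u ≤ δ, y u := sum_le_sum fun u _ => h.2.2.2.1 u v

theorem soft_lp_rounding_eleven_general {V : Type} [Fintype V] (G : SimpleGraph V)
    (hG : G.Connected) (L : V → ℕ) (k : ℕ)
    (x : V → V → ℝ) (y : V → ℝ) (hfeas : SoftLPFeasible G L k 1 x y) :
    HasSoftCapSolution G L k 11 := by
  classical
  obtain ⟨hx0, hy0, hysum, hxy, hcap, hdem, -⟩ := id hfeas
  obtain ⟨m, c, hmc⟩ := SoftCapCenter.exists_isCapRounding hG L hy0 hysum hfeas.one_le_sum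
  obtain ⟨φ, hφ, hcard⟩ := SoftCapCenter.exists_assignment_of_fractional (fun w => L w * m w)
    (fun v w => ∑ u, x u v * c u w)
    (fun v w => sum_nonneg fun u _ => mul_nonneg (hx0 u v) (hmc.nonneg u w))
    (hmc.sum_sum_mul_eq_one x hdem) (by simpa using hmc.sum_sum_mul_le x hy0 hcap)
  have hserve (v : V) : 1 ≤ m (φ v) ∧ G.dist v (φ v) ≤ 11 := by
    obtain ⟨u, -, hxc⟩ := exists_ne_zero_of_sum_ne_zero (hφ v)
    have hx := left_ne_zero_of_mul hxc
    have hc := right_ne_zero_of_mul hxc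
    refine ⟨hmc.one_le_of_ne_zero hy0 (((hx0 u v).lt_of_ne' hx).trans_le (hxy u v)) hc, ?_⟩
    have := hfeas.dist_le_of_ne_zero hx
    have := (hmc.le_of_ne_zero hc).2
    have := hG.dist_triangle (u := v) (v := u) (w := φ v)
    rw [SimpleGraph.dist_comm (u := v) (v := u)] at this
    omega
  exact ⟨m, φ, by exact_mod_cast hmc.sum_cast_eq.trans hysum, fun v => (hserve v).1,
    fun v => ⟨hG.preconnected v (φ v), (hserve v).2⟩, hcard⟩

/-- For every finite connected graph `G`, capacity function `L` and
positive integer `k`, if the soft LP relaxation has a `1`-feasible solution then there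
exist a multiplicity function `m` with `∑ v, m v = k` and an assignment `φ` such that
`m (φ v) ≥ 1` and `dist_G(v, φ v) ≤ 11` for every `v`, and `|φ⁻¹(u)| ≤ L u * m u` for
every `u`.  In particular the integrality gap of the soft LP relaxation for connected
graphs is at most `11`. -/
theorem soft_lp_rounding_eleven {V : Type} [Fintype V] (G : SimpleGraph V)
    (hG : G.Connected) (L : V → ℕ) (k : ℕ) (hk : 0 < k)
    (x : V → V → ℝ) (y : V → ℝ) (hfeas : SoftLPFeasible G L k 1 x y) :
    HasSoftCapSolution G L k 11 :=
  soft_lp_rounding_eleven_general G hG L k x y hfeas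
end

section
/- For every integer k ≥ 24 there exists a finite simple connected undirected graph G = (V, E) with uniform capacity function L(v) = k − 1 for every v ∈ V such that the soft LP relaxation has a 1-feasible solution, yet G admits no soft capacitated k-center solution at distance 3. Consequently, the integrality gap of the soft LP relaxation for connected graphs with uniform capacities is at least 4. -/
/-! The instance is a spider: a root with `t = k / 2 + 1` legs, each a path of length `3` whose
far end, the hub, carries `k` pendant leaves.

Fractionally, the root opens one center serving itself and its `t` neighbours, and every hub
opens `(k - 1) / t ≥ 1` centers serving the other `k + 2` vertices of its leg; everyone is
served within distance `1`, and the hub capacity `(k - 1)² / t ≥ k + 2` holds for `k ≥ 24`.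

Integrally, depth along a fixed leg is `1`-Lipschitz and vanishes off the leg, so a leaf is at
distance at least `4` from every vertex off its leg. Hence the `k` leaves of a leg are served
by centers on that leg, and capacity `k - 1` forces at least two of them on every leg:
`2 t > k` centers in all. -/

namespace SimpleGraph

variable {V W : Type*} {G : SimpleGraph V} {G' : SimpleGraph W}

theorem Hom.dist_map_le (f : G →g G') {u v : V} (h : G.Reachable u v) :
    G'.dist (f u) (f v) ≤ G.dist u v := by
  obtain ⟨p, hp⟩ := h.exists_walk_length_eq_dist
  simpa [hp] using dist_le (p.map f)

theorem Iso.dist_eq (e : G ≃g G') (u v : V) : G'.dist (e u) (e v) = G.dist u v := by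
  by_cases h : G.Reachable u v
  · refine le_antisymm (e.toHom.dist_map_le h) ?_
    simpa using e.symm.toHom.dist_map_le (e.reachable_iff.2 h)
  · rw [dist_eq_zero_of_not_reachable h, dist_eq_zero_of_not_reachable (mt e.reachable_iff.1 h)]

theorem Walk.apply_le_apply_add_length {f : V → ℕ} (hf : ∀ a b, G.Adj a b → f a ≤ f b + 1)
    {u v : V} (p : G.Walk u v) : f u ≤ f v + p.length := by
  induction p with
  | nil => simp
  | cons h p ih => grind [Walk.length_cons]

theorem Reachable.apply_le_apply_add_dist {f : V → ℕ} (hf : ∀ a b, G.Adj a b → f a ≤ f b + 1)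
    {u v : V} (h : G.Reachable u v) : f u ≤ f v + G.dist u v := by
  obtain ⟨p, hp⟩ := h.exists_walk_length_eq_dist
  simpa [hp] using p.apply_le_apply_add_length hf

end SimpleGraph

open Finset

section Transfer

variable {V W : Type} [Fintype V] [Fintype W] {G : SimpleGraph V} {G' : SimpleGraph W}

theorem SoftLPFeasible.map_iso (e : G ≃g G') {L : V → ℕ} {k δ : ℕ} {x : V → V → ℝ}
    {y : V → ℝ} (h : SoftLPFeasible G L k δ x y) :
    SoftLPFeasible G' (L ∘ e.symm) k δ (fun u v => x (e.symm u) (e.symm v)) (y ∘ e.symm) := by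
  obtain ⟨hx0, hy0, hysum, hxy, hcap, hcol, hsupp⟩ := h
  have hsum (f : V → ℝ) : ∑ w, f (e.symm w) = ∑ v, f v := e.symm.toEquiv.sum_comp f
  refine ⟨fun _ _ => hx0 _ _, fun _ => hy0 _, by simpa [hsum] using hysum, fun _ _ => hxy _ _,
    fun u => by simpa [hsum] using hcap (e.symm u), fun v => (hsum (x · (e.symm v))).trans (hcol _),
    fun u v huv => hsupp _ _ ?_⟩
  rwa [← e.symm.reachable_iff, ← e.symm.dist_eq] at huv

theorem HasSoftCapSolution.map_iso (e : G ≃g G') {L : V → ℕ} {k δ : ℕ}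
    (h : HasSoftCapSolution G L k δ) : HasSoftCapSolution G' (L ∘ e.symm) k δ := by
  obtain ⟨m, φ, hsum, hopen, hdist, hcap⟩ := h
  refine ⟨m ∘ e.symm, e ∘ φ ∘ e.symm, by simpa using (e.symm.toEquiv.sum_comp m).trans hsum,
    fun v => by simpa using hopen (e.symm v), fun v => ?_, fun u => ?_⟩
  · simpa [← e.symm.reachable_iff, ← e.symm.dist_eq] using hdist (e.symm v)
  · have : {v | (e ∘ φ ∘ e.symm) v = u} = e.symm ⁻¹' {v | φ v = e.symm u} := by
      ext v; exact e.eq_symm_apply.symm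
    rw [this, Set.ncard_preimage_of_injective_subset_range e.symm.injective (by simp)]
    exact hcap _

end Transfer

section Assignment

variable {V : Type} [Fintype V] [DecidableEq V]

theorem softLPFeasible_of_assignment (G : SimpleGraph V) (L : V → ℕ) (k δ : ℕ) (σ : V → V)
    (y : V → ℝ) (hy0 : ∀ u, 0 ≤ y u) (hysum : ∑ u, y u = k) (hy1 : ∀ v, 1 ≤ y (σ v))
    (hdist : ∀ v, G.Reachable (σ v) v ∧ G.dist (σ v) v ≤ δ)
    (hload : ∀ v, (#{w | σ w = σ v} : ℝ) ≤ L (σ v) * y (σ v)) :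
    SoftLPFeasible G L k δ (fun u v => if σ v = u then 1 else 0) y := by
  refine ⟨fun _ _ => by positivity, hy0, hysum, fun u v => ?_, fun u => ?_, fun v => by simp,
    fun u v huv => if_neg fun (h : σ v = u) => huv (h ▸ hdist v)⟩
  · dsimp only
    split_ifs with h
    · exact h ▸ hy1 v
    · exact hy0 u
  · rw [sum_boole]
    by_cases hu : ∃ v, σ v = u
    · obtain ⟨v, rfl⟩ := hu
      exact hload v
    · push Not at hu
      simp [filter_false_of_mem fun w _ => hu w, mul_nonneg (Nat.cast_nonneg _) (hy0 u)]

theorem card_le_mul_sum_of_mapsTo {φ : V → V} {m : V → ℕ} {c : ℕ}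
    (hcap : ∀ u, {v | φ v = u}.ncard ≤ c * m u) {S T : Finset V} (hST : ∀ v ∈ S, φ v ∈ T) :
    #S ≤ c * ∑ u ∈ T, m u := by
  rw [card_eq_sum_card_fiberwise hST, mul_sum]
  refine sum_le_sum fun u _ => le_trans ?_ (hcap u)
  rw [Set.ncard_eq_toFinset_card']
  exact card_le_card fun v => by simp +contextual

end Assignment

/-- The vertices of a spider with `t` legs: the root `none`, and on leg `i` the vertices
`some (i, j)`, where `j = 0, 1, 2` is a path hanging from the root and `j ≥ 3` are the `ℓ`
leaves attached to its end `j = 2`. -/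
abbrev SpiderV (t ℓ : ℕ) := Option (Fin t × Fin (ℓ + 3))

namespace Spider

variable {t ℓ : ℕ}

def parent (p : Fin t × Fin (ℓ + 3)) : SpiderV t ℓ :=
  if p.2.1 = 0 then none else some (p.1, ⟨min (p.2.1 - 1) 2, by omega⟩)

variable (t ℓ) in
def graph : SimpleGraph (SpiderV t ℓ) :=
  SimpleGraph.fromRel fun u v => ∃ p, u = some p ∧ v = parent p

theorem adj_parent (p : Fin t × Fin (ℓ + 3)) : (graph t ℓ).Adj (some p) (parent p) := by
  refine ⟨?_, Or.inl ⟨p, rfl, rfl⟩⟩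
  unfold parent
  split_ifs <;> simp [Prod.ext_iff, Fin.ext_iff]; omega

theorem reachable_root (v : SpiderV t ℓ) : (graph t ℓ).Reachable v none := by
  rcases v with _ | ⟨i, j, hj⟩
  · rfl
  induction j using Nat.strong_induction_on with
  | _ j ih =>
    refine (adj_parent (i, ⟨j, hj⟩)).reachable.trans ?_
    simp only [parent]
    split_ifs with hj0
    · rfl
    · exact ih _ (by omega) _

theorem connected : (graph t ℓ).Connected :=
  SimpleGraph.connected_iff_exists_forall_reachable _ |>.2 ⟨none, fun v => (reachable_root v).symm⟩

def legDepth (i : Fin t) : SpiderV t ℓ → ℕ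
  | none => 0
  | some (i', j) => if i' = i then min j.1 3 + 1 else 0

theorem legDepth_le_of_adj (i : Fin t) {u v : SpiderV t ℓ} (h : (graph t ℓ).Adj u v) :
    legDepth i u ≤ legDepth i v + 1 := by
  obtain ⟨-, ⟨⟨i', j⟩, rfl, rfl⟩ | ⟨⟨i', j⟩, rfl, rfl⟩⟩ := h <;>
    simp only [legDepth, parent] <;> split_ifs <;> simp_all <;> omega

def leaf (i : Fin t) (l : Fin ℓ) : SpiderV t ℓ := some (i, l.addNat 3)

theorem leaf_injective (i : Fin t) : Function.Injective (leaf (ℓ := ℓ) i) := by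
  intro l l' h
  simpa [leaf] using h

theorem exists_eq_some_of_dist_leaf_le {i : Fin t} {l : Fin ℓ} {v : SpiderV t ℓ}
    (hv : (graph t ℓ).Reachable (leaf i l) v ∧ (graph t ℓ).dist (leaf i l) v ≤ 3) :
    ∃ j, v = some (i, j) := by
  have h := hv.1.apply_le_apply_add_dist fun _ _ => legDepth_le_of_adj i
  rw [show legDepth i (leaf i l) = 4 by simp [leaf, legDepth]] at h
  rcases v with _ | ⟨i', j⟩
  · simp only [legDepth] at h; omega
  · by_cases hi : i' = i
    · exact ⟨j, hi ▸ rfl⟩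
    · simp only [legDepth, hi, if_false] at h; omega

theorem not_hasSoftCapSolution {c k : ℕ} (hc : c < ℓ) (hk : k < 2 * t) :
    ¬ HasSoftCapSolution (graph t ℓ) (fun _ => c) k 3 := by
  rintro ⟨m, φ, hsum, -, hdist, hcap⟩
  have hleg (i : Fin t) : 2 ≤ ∑ j, m (some (i, j)) := by
    let legEmb : Fin (ℓ + 3) ↪ SpiderV t ℓ := ⟨fun j => some (i, j), fun _ _ h => by simpa using h⟩
    have hmaps : ∀ v ∈ univ.image (leaf i), φ v ∈ univ.map legEmb := by
      simp only [mem_image, mem_map, mem_univ, true_and, forall_exists_index,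
        forall_apply_eq_imp_iff]
      exact fun l => (exists_eq_some_of_dist_leaf_le (hdist (leaf i l))).imp fun _ h => h.symm
    have := card_le_mul_sum_of_mapsTo hcap hmaps
    rw [card_image_of_injective _ (leaf_injective i), sum_map, card_univ, Fintype.card_fin] at this
    change ℓ ≤ c * ∑ j, m (some (i, j)) at this
    by_contra! h
    have : c * ∑ j, m (some (i, j)) ≤ c * 1 := Nat.mul_le_mul_left c (by omega)
    omega
  have hlegs : ∑ i : Fin t, ∑ j, m (some (i, j)) ≤ k := by
    rw [← hsum, Fintype.sum_option, ← Fintype.sum_prod_type']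
    exact Nat.le_add_left _ _
  have := (sum_le_sum fun i _ => hleg i).trans hlegs
  simp only [sum_const, card_univ, Fintype.card_fin, smul_eq_mul] at this
  omega

def hub (i : Fin t) : SpiderV t ℓ := some (i, 2)

def serve : SpiderV t ℓ → SpiderV t ℓ
  | none => none
  | some (i, j) => if j = 0 then none else hub i

def opening (a : ℝ) : SpiderV t ℓ → ℝ
  | none => 1
  | some (_, j) => if j = 2 then a else 0

theorem serve_eq_or_adj (v : SpiderV t ℓ) : serve v = v ∨ (graph t ℓ).Adj (serve v) v := by
  rcases v with _ | ⟨i, j⟩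
  · exact Or.inl rfl
  rcases j with ⟨_ | _ | _ | j, hj⟩
  · right
    simpa [serve, parent] using (adj_parent (i, 0)).symm
  · right
    convert adj_parent (i, 2) using 1 <;>
      simp [serve, hub, parent, Nat.mod_eq_of_lt (show 2 < ℓ + 3 by omega)]
  · left
    simp [serve, hub, Fin.ext_iff]
  · right
    convert (adj_parent (i, ⟨j + 3, hj⟩)).symm using 1
    simp [serve, parent, hub, Fin.ext_iff, Nat.mod_eq_of_lt (show 2 < ℓ + 3 by omega)]

theorem card_serve_eq_none : #{v : SpiderV t ℓ | serve v = none} = t + 1 := by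
  rw [card_filter]
  simp [Fintype.sum_option, Fintype.sum_prod_type, serve, hub, -sum_boole]
  omega

theorem card_serve_eq_hub (i : Fin t) : #{v : SpiderV t ℓ | serve v = hub i} = ℓ + 2 := by
  rw [card_filter]
  simp [Fintype.sum_option, Fintype.sum_prod_type, serve, hub, -sum_boole, and_comm (b := _ = i),
    ite_and, Fin.sum_univ_succ (n := ℓ + 2)]

theorem sum_opening (a : ℝ) : ∑ v : SpiderV t ℓ, opening a v = 1 + t * a := by
  simp [Fintype.sum_option, Fintype.sum_prod_type, opening]

theorem serve_eq_none_or_hub (v : SpiderV t ℓ) : serve v = none ∨ ∃ i, serve v = hub i := by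
  rcases v with _ | ⟨i, j⟩
  · exact Or.inl rfl
  · simp only [serve]
    split_ifs
    exacts [Or.inl rfl, Or.inr ⟨i, rfl⟩]

theorem opening_hub (a : ℝ) (i : Fin t) : opening a (hub (ℓ := ℓ) i) = a := by
  simp [opening, hub]

theorem exists_softLPFeasible {c k : ℕ} (ht : 0 < t) (hroot : t + 1 ≤ c) (htk : t < k)
    (hhub : t * (ℓ + 2) ≤ c * (k - 1)) :
    ∃ x y, SoftLPFeasible (graph t ℓ) (fun _ => c) k 1 x y := by
  set a : ℝ := ((k : ℝ) - 1) / t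
  have htR : (0 : ℝ) < t := by exact_mod_cast ht
  have hk1 : ((k - 1 : ℕ) : ℝ) = k - 1 := by rw [Nat.cast_sub (by omega)]; simp
  have ha : 1 ≤ a := by
    rw [le_div_iff₀ htR, one_mul, ← hk1]
    exact_mod_cast Nat.le_sub_one_of_lt htk
  refine ⟨_, _, softLPFeasible_of_assignment _ _ k 1 serve (opening a) ?_ ?_ ?_ ?_ ?_⟩
  · rintro (_ | ⟨i, j⟩)
    · exact zero_le_one
    · simp only [opening]; split_ifs <;> linarith
  · rw [sum_opening, mul_div_cancel₀ _ htR.ne']; ring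
  · intro v
    rcases serve_eq_none_or_hub v with h | ⟨i, h⟩
    · simp [h, opening]
    · rwa [h, opening_hub]
  · intro v
    rcases serve_eq_or_adj v with h | h
    · simp [h]
    · exact ⟨h.reachable, by simpa using SimpleGraph.dist_le h.toWalk⟩
  · intro v
    rcases serve_eq_none_or_hub v with h | ⟨i, h⟩
    · simp only [h, card_serve_eq_none, opening, mul_one]; exact_mod_cast hroot
    · rw [h, card_serve_eq_hub, opening_hub, mul_div_assoc', le_div_iff₀ htR, ← hk1]
      exact_mod_cast (by linarith : (ℓ + 2) * t ≤ c * (k - 1))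

end Spider

/-- For every integer `k ≥ 24` there is a finite connected graph `G`
with uniform capacities `L ≡ k - 1` such that the soft LP relaxation has a `1`-feasible
solution, yet `G` admits no soft capacitated `k`-center solution at distance `3`.
Consequently the integrality gap of the soft LP relaxation for connected graphs with
uniform capacities is at least `4`. -/
theorem soft_uniform_gap_at_least_four (k : ℕ) (hk : 24 ≤ k) :
    ∃ (n : ℕ) (G : SimpleGraph (Fin n)), G.Connected ∧
      (∃ x y, SoftLPFeasible G (fun _ => k - 1) k 1 x y) ∧
      ¬ HasSoftCapSolution G (fun _ => k - 1) k 3 := by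
  obtain ⟨t, ht⟩ : ∃ t, t = k / 2 + 1 := ⟨_, rfl⟩
  have hhub : t * (k + 2) ≤ (k - 1) * (k - 1) := by
    obtain ⟨j, rfl⟩ : ∃ j, k = j + 1 := ⟨k - 1, by omega⟩
    have h2t : 2 * t ≤ j + 3 := by omega
    simp only [Nat.add_sub_cancel]
    nlinarith
  let e := SimpleGraph.Iso.map (Fintype.equivFin (SpiderV t k)) (Spider.graph t k)
  refine ⟨_, _, e.connected_iff.1 Spider.connected, ?_, fun h => ?_⟩
  · obtain ⟨x, y, hxy⟩ :=
      Spider.exists_softLPFeasible (c := k - 1) (by omega) (by omega) (by omega) hhub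
    exact ⟨_, _, hxy.map_iso e⟩
  · exact Spider.not_hasSoftCapSolution (c := k - 1) (by omega) (by omega) (h.map_iso e.symm)
end

section
/- Let G = (V, E) be a finite simple undirected graph with uniform capacity function L(v) = L ≥ 1 for all v ∈ V, and let k be a positive integer. Suppose V_0 ⊆ V satisfies dist_G(u, v) ≥ 3 for every pair of distinct u, v ∈ V_0, and let V' = { v ∈ V : dist_G(u, v) ≥ 3 for all u ∈ V_0 }. If |V_0| + |V'| / L > k, then LP1 has no feasible solution: indeed, any feasible assignment (x, y) would satisfy ∑_{v ∈ N_G[V_0]} y_v ≥ |V_0| and ∑_{v ∈ N_G[V']} y_v ≥ |V'| / L, where N_G[X] is the set of vertices at distance at most 1 from X, the sets N_G[V_0] and N_G[V'] cover V and are disjoint, so ∑_{v ∈ V} y_v > k, contradicting constraint (1). -/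
open Finset

namespace SimpleGraph

variable {V : Type*} (G : SimpleGraph V)

lemma reachable_and_dist_le_iff {u v : V} {n : ℕ} :
    G.Reachable u v ∧ G.dist u v ≤ n ↔ G.edist u v ≤ n := by
  constructor
  · rintro ⟨hr, hd⟩
    rw [← hr.coe_dist_eq_edist]
    exact_mod_cast hd
  · intro h
    have hr : G.Reachable u v :=
      G.reachable_of_edist_ne_top (ne_top_of_le_ne_top (ENat.natCast_ne_top n) h)
    rw [← hr.coe_dist_eq_edist] at h
    exact ⟨hr, by exact_mod_cast h⟩

lemma not_reachable_or_lt_dist_iff {u v : V} {n : ℕ} :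
    ¬ G.Reachable u v ∨ n < G.dist u v ↔ (n : ℕ∞) < G.edist u v := by
  rw [← not_le (a := G.edist u v), ← reachable_and_dist_le_iff, not_and_or, not_le]

variable [Fintype V]

open Classical in
noncomputable def closedBallFinset (c : V) (δ : ℕ) : Finset V :=
  univ.filter fun w => G.edist w c ≤ δ

variable {G}

@[simp]
lemma mem_closedBallFinset {c w : V} {δ : ℕ} :
    w ∈ G.closedBallFinset c δ ↔ G.edist w c ≤ δ := by
  simp [closedBallFinset]

lemma disjoint_closedBallFinset {u v : V} {δ : ℕ}
    (huv : ((2 * δ : ℕ) : ℕ∞) < G.edist u v) :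
    Disjoint (G.closedBallFinset u δ) (G.closedBallFinset v δ) := by
  refine Finset.disjoint_left.2 fun w hu hv => huv.not_ge ?_
  rw [mem_closedBallFinset] at hu hv
  calc G.edist u v ≤ G.edist u w + G.edist w v := G.edist_triangle
    _ ≤ δ + δ := add_le_add (by rwa [edist_comm]) hv
    _ = ((2 * δ : ℕ) : ℕ∞) := by push_cast; ring

lemma disjoint_biUnion_closedBallFinset [DecidableEq V] {S T : Finset V} {δ : ℕ}
    (hST : ∀ u ∈ S, ∀ v ∈ T, ((2 * δ : ℕ) : ℕ∞) < G.edist u v) :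
    Disjoint (S.biUnion (G.closedBallFinset · δ)) (T.biUnion (G.closedBallFinset · δ)) :=
  (disjoint_biUnion_left _ _ _).2 fun u hu => (disjoint_biUnion_right _ _ _).2 fun v hv =>
    disjoint_closedBallFinset (hST u hu v hv)

end SimpleGraph

open SimpleGraph

namespace LPFeasible

variable {V : Type} [Fintype V] {G : SimpleGraph V} {L : V → ℕ} {k δ : ℕ}
  {x : V → V → ℝ} {y : V → ℝ}

lemma sum_le (h : LPFeasible G L k δ x y) (T : Finset V) : ∑ w ∈ T, y w ≤ k := by
  obtain ⟨-, hy0, hsum, -⟩ := h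
  rw [← hsum]
  exact sum_le_sum_of_subset_of_nonneg (subset_univ T) fun w _ _ => hy0 w

lemma sum_eq_one_of_closedBallFinset_subset (h : LPFeasible G L k δ x y) {v : V}
    {T : Finset V} (hT : G.closedBallFinset v δ ⊆ T) : ∑ w ∈ T, x w v = 1 := by
  obtain ⟨-, -, -, -, -, hclient, -, hfar⟩ := h
  rw [← hclient v]
  refine sum_subset (subset_univ T) fun w _ hw => hfar w v fun hwv => hw (hT ?_)
  exact mem_closedBallFinset.2 (G.reachable_and_dist_le_iff.1 hwv)

lemma one_le_sum_closedBallFinset (h : LPFeasible G L k δ x y) (v : V) :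
    1 ≤ ∑ w ∈ G.closedBallFinset v δ, y w :=
  calc 1 = ∑ w ∈ G.closedBallFinset v δ, x w v :=
        (h.sum_eq_one_of_closedBallFinset_subset subset_rfl).symm
    _ ≤ ∑ w ∈ G.closedBallFinset v δ, y w := sum_le_sum fun w _ => h.2.2.2.1 w v

lemma card_le_sum_biUnion_closedBallFinset [DecidableEq V] (h : LPFeasible G L k δ x y)
    {S : Finset V}
    (hS : (S : Set V).Pairwise fun u v => ((2 * δ : ℕ) : ℕ∞) < G.edist u v) :
    (S.card : ℝ) ≤ ∑ w ∈ S.biUnion (G.closedBallFinset · δ), y w := by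
  rw [sum_biUnion fun u hu v hv huv => disjoint_closedBallFinset (hS hu hv huv), cast_card]
  exact sum_le_sum fun v _ => h.one_le_sum_closedBallFinset v

lemma card_le_sum_capacity_mul [DecidableEq V] (h : LPFeasible G L k δ x y) (S : Finset V) :
    (S.card : ℝ) ≤ ∑ w ∈ S.biUnion (G.closedBallFinset · δ), (L w : ℝ) * y w := by
  have hx0 : ∀ u v, 0 ≤ x u v := h.1
  have hcap : ∀ u, ∑ v, x u v ≤ L u * y u := h.2.2.2.2.1
  set T := S.biUnion (G.closedBallFinset · δ)
  calc (S.card : ℝ) = ∑ v ∈ S, ∑ w ∈ T, x w v := by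
        rw [cast_card]
        refine sum_congr rfl fun v hv => (h.sum_eq_one_of_closedBallFinset_subset ?_).symm
        exact subset_biUnion_of_mem (G.closedBallFinset · δ) hv
    _ = ∑ w ∈ T, ∑ v ∈ S, x w v := sum_comm
    _ ≤ ∑ w ∈ T, ∑ v, x w v := sum_le_sum fun w _ =>
        sum_le_sum_of_subset_of_nonneg (subset_univ S) fun v _ _ => hx0 w v
    _ ≤ ∑ w ∈ T, (L w : ℝ) * y w := sum_le_sum fun w _ => hcap w

end LPFeasible

theorem lp_infeasibility_witness_general {V : Type} [Fintype V] (G : SimpleGraph V)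
    (L₀ : ℕ) (k : ℕ) (V₀ : Finset V)
    (hsep : ∀ u ∈ V₀, ∀ v ∈ V₀, u ≠ v → (¬ G.Reachable u v ∨ 3 ≤ G.dist u v))
    (hbig : (k : ℝ) <
      (V₀.card : ℝ) +
        ({v : V | ∀ u ∈ V₀, ¬ G.Reachable u v ∨ 3 ≤ G.dist u v}.ncard : ℝ) / (L₀ : ℝ)) :
    ¬ ∃ x y, LPFeasible G (fun _ => L₀) k 1 x y := by
  classical
  rintro ⟨x, y, h⟩
  set V' := {v : V | ∀ u ∈ V₀, ¬ G.Reachable u v ∨ 3 ≤ G.dist u v}.toFinset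
  set N := fun S : Finset V => S.biUnion (G.closedBallFinset · 1)
  -- `3 ≤ d` is by definition `2 * 1 < d` in `ℕ`
  have hV₀ : (V₀ : Set V).Pairwise fun u v => ((2 * 1 : ℕ) : ℕ∞) < G.edist u v :=
    fun u hu v hv huv => G.not_reachable_or_lt_dist_iff.1 (hsep u hu v hv huv)
  have hdisj : Disjoint (N V₀) (N V') := disjoint_biUnion_closedBallFinset fun u hu v hv =>
    G.not_reachable_or_lt_dist_iff.1 (Set.mem_toFinset.1 hv u hu)
  have hV' : (V'.card : ℝ) / L₀ ≤ ∑ w ∈ N V', y w :=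
    div_le_of_le_mul₀ (Nat.cast_nonneg _) (sum_nonneg fun w _ => h.2.1 w)
      (by simpa only [mul_comm _ (L₀ : ℝ), mul_sum] using h.card_le_sum_capacity_mul V')
  have htotal := h.sum_le (N V₀ ∪ N V')
  rw [sum_union hdisj] at htotal
  rw [Set.ncard_eq_toFinset_card'] at hbig
  linarith [h.card_le_sum_biUnion_closedBallFinset hV₀]

/-- Let `G` be a finite graph with uniform capacities `L ≡ L₀`
(`L₀ ≥ 1`) and `k` a positive integer.  Suppose `V₀ ⊆ V` has pairwise distances at least
`3` and let `V' = {v | dist_G(u, v) ≥ 3 for all u ∈ V₀}` (distances between vertices in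
different components count as infinite).  If `|V₀| + |V'| / L₀ > k` then LP1 has no
feasible solution. -/
theorem lp_infeasibility_witness {V : Type} [Fintype V] (G : SimpleGraph V)
    (L₀ : ℕ) (hL : 1 ≤ L₀) (k : ℕ) (hk : 0 < k) (V₀ : Finset V)
    (hsep : ∀ u ∈ V₀, ∀ v ∈ V₀, u ≠ v → (¬ G.Reachable u v ∨ 3 ≤ G.dist u v))
    (hbig : (k : ℝ) <
      (V₀.card : ℝ) +
        ({v : V | ∀ u ∈ V₀, ¬ G.Reachable u v ∨ 3 ≤ G.dist u v}.ncard : ℝ) / (L₀ : ℝ)) :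
    ¬ ∃ x y, LPFeasible G (fun _ => L₀) k 1 x y :=
  lp_infeasibility_witness_general G L₀ k V₀ hsep hbig
end

section
/- Let (x, y) be a δ-feasible assignment, let a, b ∈ V be distinct vertices with L(a) ≤ L(b), and let α be a real number with 0 < α ≤ min(y_a, 1 − y_b). Let (x', y') be the result of shifting α from a to b. Then (x', y') is a (δ + dist_G(a, b))-feasible assignment; for every vertex v ≠ b we have radius_{(x',y')}(v) ≤ radius_{(x,y)}(v); and radius_{(x',y')}(b) ≤ max(radius_{(x,y)}(a) + dist_G(a, b), radius_{(x,y)}(b)). -/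
/-- `radius_{(x,y)}(u)`: the greatest integer `i` such that some vertex `v` with
`dist_G(u, v) = i` has `x u v > 0` (and `0` if there is no such `i`). -/
noncomputable def lpRadius {V : Type} (G : SimpleGraph V) (x : V → V → ℝ) (u : V) : ℕ :=
  sSup {i : ℕ | ∃ v, G.dist u v = i ∧ 0 < x u v}

/-- The `x`-part of the result of shifting `α` from `a` to `b`: with `ε = α / y a`,
`x a v` decreases by `ε * x a v` and `x b v` increases by `ε * x a v` for every `v`. -/
noncomputable def shiftX {V : Type} [DecidableEq V] (x : V → V → ℝ) (y : V → ℝ)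
    (a b : V) (α : ℝ) : V → V → ℝ :=
  fun u v =>
    if u = a then x a v - (α / y a) * x a v
    else if u = b then x b v + (α / y a) * x a v
    else x u v

/-- The `y`-part of the result of shifting `α` from `a` to `b`:
`y a` decreases by `α` and `y b` increases by `α`. -/
noncomputable def shiftY {V : Type} [DecidableEq V] (y : V → ℝ) (a b : V) (α : ℝ) :
    V → ℝ :=
  fun u => if u = a then y a - α else if u = b then y b + α else y u

open Finset

section Row

variable {V : Type} [Fintype V]

/-- The constraints of `LPFeasible` that involve a single center: its row `r = x u`, its opening
`s = y u` and its capacity `c = L u`. -/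
structure RowFeasible (c : ℝ) (r : V → ℝ) (s : ℝ) : Prop where
  nonneg : ∀ v, 0 ≤ r v
  opening_nonneg : 0 ≤ s
  le_opening : ∀ v, r v ≤ s
  sum_le : ∑ v, r v ≤ c * s
  opening_le_one : s ≤ 1

variable {c c' : ℝ} {r r' : V → ℝ} {s s' : ℝ}

theorem RowFeasible.smul (h : RowFeasible c r s) {t : ℝ} (ht₀ : 0 ≤ t) (ht₁ : t ≤ 1) :
    RowFeasible c (t • r) (t * s) where
  nonneg v := mul_nonneg ht₀ (h.nonneg v)
  opening_nonneg := mul_nonneg ht₀ h.opening_nonneg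
  le_opening v := mul_le_mul_of_nonneg_left (h.le_opening v) ht₀
  sum_le := by
    simp only [Pi.smul_apply, smul_eq_mul, ← mul_sum]
    nlinarith [h.sum_le]
  opening_le_one := by nlinarith [h.opening_nonneg, h.opening_le_one]

theorem RowFeasible.add (h : RowFeasible c r s) (h' : RowFeasible c' r' s') (hc : c' ≤ c)
    (hs : s + s' ≤ 1) : RowFeasible c (r + r') (s + s') where
  nonneg v := add_nonneg (h.nonneg v) (h'.nonneg v)
  opening_nonneg := add_nonneg h.opening_nonneg h'.opening_nonneg
  le_opening v := add_le_add (h.le_opening v) (h'.le_opening v)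
  sum_le := by
    simp only [Pi.add_apply, sum_add_distrib]
    nlinarith [h.sum_le, h'.sum_le, h'.opening_nonneg]
  opening_le_one := hs

end Row

theorem lpFeasible_iff_of_connected {V : Type} [Fintype V] {G : SimpleGraph V}
    (hG : G.Connected) {L : V → ℕ} {k δ : ℕ} {x : V → V → ℝ} {y : V → ℝ} :
    LPFeasible G L k δ x y ↔
      (∀ u, RowFeasible (L u) (x u) (y u)) ∧ ∑ u, y u = k ∧ (∀ v, ∑ u, x u v = 1) ∧
        ∀ u v, δ < G.dist u v → x u v = 0 := by
  constructor
  · rintro ⟨hx₀, hy₀, hsum, hxy, hcap, hcol, hy₁, hfar⟩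
    exact ⟨fun u => ⟨hx₀ u, hy₀ u, hxy u, hcap u, hy₁ u⟩, hsum, hcol,
      fun u v h => hfar u v fun ⟨_, hd⟩ => h.not_ge hd⟩
  · rintro ⟨hrow, hsum, hcol, hfar⟩
    exact ⟨fun u => (hrow u).nonneg, fun u => (hrow u).opening_nonneg, hsum,
      fun u => (hrow u).le_opening, fun u => (hrow u).sum_le, hcol,
      fun u => (hrow u).opening_le_one,
      fun u v h => hfar u v (lt_of_not_ge fun hd => h ⟨hG.preconnected u v, hd⟩)⟩

section Radius

variable {V : Type} {G : SimpleGraph V} {x : V → V → ℝ} {u : V}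

theorem lpRadius_le_of_forall {r : ℕ} (h : ∀ v, r < G.dist u v → x u v = 0) :
    lpRadius G x u ≤ r := by
  refine csSup_le' ?_
  rintro i ⟨v, rfl, hv⟩
  by_contra! hr
  exact hv.ne' (h v hr)

theorem eq_zero_of_lpRadius_lt [Fintype V] {v : V} (hx : 0 ≤ x u v)
    (h : lpRadius G x u < G.dist u v) : x u v = 0 := by
  have hbdd : BddAbove {i : ℕ | ∃ v, G.dist u v = i ∧ 0 < x u v} :=
    ⟨univ.sup (G.dist u), by rintro i ⟨w, rfl, -⟩; exact le_sup (mem_univ w)⟩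
  by_contra hne
  exact h.not_ge (le_csSup hbdd ⟨v, rfl, lt_of_le_of_ne hx (Ne.symm hne)⟩)

end Radius

theorem sum_eq_of_transfer {V : Type} [Fintype V] [DecidableEq V] {f g : V → ℝ} {a b : V}
    {t : ℝ} (hab : a ≠ b) (ha : g a = f a - t) (hb : g b = f b + t)
    (hg : ∀ u, u ≠ a → u ≠ b → g u = f u) : ∑ u, g u = ∑ u, f u := by
  suffices ∑ u, (g u - f u) = 0 by rwa [sum_sub_distrib, sub_eq_zero] at this
  rw [← sum_subset (subset_univ {a, b}) fun u _ hu => ?_, sum_pair hab, ha, hb]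
  · ring
  · simp only [mem_insert, mem_singleton, not_or] at hu
    rw [hg u hu.1 hu.2, sub_self]

section Shift

variable {V : Type} [DecidableEq V] {x : V → V → ℝ} {y : V → ℝ} {a b : V} {α : ℝ}

theorem shiftX_left : shiftX x y a b α a = (1 - α / y a) • x a := by
  ext v
  simp [shiftX]
  ring

theorem shiftX_right (hab : a ≠ b) : shiftX x y a b α b = x b + (α / y a) • x a := by
  ext v
  simp [shiftX, hab.symm]

theorem shiftX_of_ne {u : V} (hua : u ≠ a) (hub : u ≠ b) : shiftX x y a b α u = x u := by
  ext v
  simp [shiftX, hua, hub]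

theorem shiftY_left : shiftY y a b α a = y a - α := by
  simp [shiftY]

theorem shiftY_right (hab : a ≠ b) : shiftY y a b α b = y b + α := by
  simp [shiftY, hab.symm]

theorem shiftY_of_ne {u : V} (hua : u ≠ a) (hub : u ≠ b) : shiftY y a b α u = y u := by
  simp [shiftY, hua, hub]

theorem shiftX_eq_zero {u v : V} (hu : x u v = 0) (hb : u = b → x a v = 0) :
    shiftX x y a b α u v = 0 := by
  unfold shiftX
  split_ifs with hua hub
  · subst hua; simp [hu]
  · subst hub; simp [hu, hb rfl]
  · exact hu

end Shift

section ShiftFeasible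

variable {V : Type} [Fintype V] [DecidableEq V] {x : V → V → ℝ} {y : V → ℝ} {a b : V} {α : ℝ}

theorem sum_shiftY (hab : a ≠ b) : ∑ u, shiftY y a b α u = ∑ u, y u :=
  sum_eq_of_transfer hab shiftY_left (shiftY_right hab) fun _ => shiftY_of_ne

theorem sum_shiftX_apply (hab : a ≠ b) (v : V) :
    ∑ u, shiftX x y a b α u v = ∑ u, x u v :=
  sum_eq_of_transfer (t := α / y a * x a v) hab (by simp [shiftX_left]; ring)
    (by simp [shiftX_right hab]) fun _ hua hub => by rw [shiftX_of_ne hua hub]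

theorem rowFeasible_shift {c : V → ℝ} (hrow : ∀ u, RowFeasible (c u) (x u) (y u))
    (hab : a ≠ b) (hc : c a ≤ c b) (hα₀ : 0 < α) (hα : α ≤ min (y a) (1 - y b)) (u : V) :
    RowFeasible (c u) (shiftX x y a b α u) (shiftY y a b α u) := by
  have hαa : α ≤ y a := hα.trans (min_le_left _ _)
  have hαb : α ≤ 1 - y b := hα.trans (min_le_right _ _)
  have hya : 0 < y a := hα₀.trans_le hαa
  set ε := α / y a
  have hε₀ : 0 ≤ ε := by positivity
  have hε₁ : ε ≤ 1 := div_le_one_of_le₀ hαa hya.le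
  have hεy : ε * y a = α := div_mul_cancel₀ α hya.ne'
  by_cases hua : u = a
  · subst hua
    rw [shiftX_left, shiftY_left, show y u - α = (1 - ε) * y u by rw [sub_mul, one_mul, hεy]]
    exact (hrow u).smul (by linarith) (by linarith)
  by_cases hub : u = b
  · subst hub
    rw [shiftX_right hab, shiftY_right hab, show y u + α = y u + ε * y a by rw [hεy]]
    exact (hrow u).add ((hrow a).smul hε₀ hε₁) hc (by linarith)
  rw [shiftX_of_ne hua hub, shiftY_of_ne hua hub]
  exact hrow u

end ShiftFeasible

section ShiftSupport

variable {V : Type} [DecidableEq V] {G : SimpleGraph V} {x : V → V → ℝ} {y : V → ℝ} {a b : V}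
  {α : ℝ}

theorem shiftX_eq_zero_of_dist_lt (hG : G.Connected) {δ : ℕ}
    (hfar : ∀ u v, δ < G.dist u v → x u v = 0) {u v : V} (h : δ + G.dist a b < G.dist u v) :
    shiftX x y a b α u v = 0 := by
  refine shiftX_eq_zero (hfar u v (by omega)) fun hub => hfar a v ?_
  subst hub
  have := hG.dist_triangle (u := u) (v := a) (w := v)
  have := G.dist_comm (u := a) (v := u)
  omega

variable [Fintype V]

theorem lpRadius_shiftX_le (hx : ∀ u v, 0 ≤ x u v) {v : V} (hvb : v ≠ b) :
    lpRadius G (shiftX x y a b α) v ≤ lpRadius G x v :=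
  lpRadius_le_of_forall fun w hw =>
    shiftX_eq_zero (eq_zero_of_lpRadius_lt (hx v w) hw) fun hv => (hvb hv).elim

theorem lpRadius_shiftX_right_le (hx : ∀ u v, 0 ≤ x u v) (hG : G.Connected) :
    lpRadius G (shiftX x y a b α) b ≤ max (lpRadius G x a + G.dist a b) (lpRadius G x b) := by
  refine lpRadius_le_of_forall fun w hw => shiftX_eq_zero ?_ fun _ => ?_
  · exact eq_zero_of_lpRadius_lt (hx b w) ((le_max_right _ _).trans_lt hw)
  · have := hG.dist_triangle (u := b) (v := a) (w := w)
    have := G.dist_comm (u := a) (v := b)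
    exact eq_zero_of_lpRadius_lt (G := G) (hx a w) (by omega)

end ShiftSupport

theorem shifting_lemma_general {V : Type} [Fintype V] [DecidableEq V] (G : SimpleGraph V)
    (hG : G.Connected) (L : V → ℕ) (k δ : ℕ)
    (x : V → V → ℝ) (y : V → ℝ) (hfeas : LPFeasible G L k δ x y)
    (a b : V) (hab : a ≠ b) (hL : L a ≤ L b)
    (α : ℝ) (hα0 : 0 < α) (hα : α ≤ min (y a) (1 - y b)) :
    LPFeasible G L k (δ + G.dist a b) (shiftX x y a b α) (shiftY y a b α) ∧
    (∀ v, v ≠ b → lpRadius G (shiftX x y a b α) v ≤ lpRadius G x v) ∧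
    lpRadius G (shiftX x y a b α) b ≤
      max (lpRadius G x a + G.dist a b) (lpRadius G x b) := by
  obtain ⟨hrow, hsum, hcol, hfar⟩ := (lpFeasible_iff_of_connected hG).1 hfeas
  have hx : ∀ u v, 0 ≤ x u v := fun u => (hrow u).nonneg
  refine ⟨(lpFeasible_iff_of_connected hG).2 ⟨?_, ?_, ?_, ?_⟩,
    fun v => lpRadius_shiftX_le hx, lpRadius_shiftX_right_le hx hG⟩
  · exact rowFeasible_shift hrow hab (Nat.cast_le.2 hL) hα0 hα
  · rw [sum_shiftY hab, hsum]
  · exact fun v => (sum_shiftX_apply hab v).trans (hcol v)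
  · exact fun u v => shiftX_eq_zero_of_dist_lt hG hfar

/-- **Lemma 1, shifting.** Let `(x, y)` be a `δ`-feasible assignment, let
`a ≠ b` with `L a ≤ L b`, and let `0 < α ≤ min (y a) (1 - y b)`.  Then the result
`(x', y')` of shifting `α` from `a` to `b` is `(δ + dist_G(a, b))`-feasible, the radius of
every vertex `v ≠ b` does not increase, and the radius of `b` is at most
`max (radius_{(x,y)}(a) + dist_G(a, b)) (radius_{(x,y)}(b))`. -/
theorem shifting_lemma {V : Type} [Fintype V] [DecidableEq V] (G : SimpleGraph V)
    (hG : G.Connected) (L : V → ℕ) (k δ : ℕ) (hδ : 0 < δ)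
    (x : V → V → ℝ) (y : V → ℝ) (hfeas : LPFeasible G L k δ x y)
    (a b : V) (hab : a ≠ b) (hL : L a ≤ L b)
    (α : ℝ) (hα0 : 0 < α) (hα : α ≤ min (y a) (1 - y b)) :
    LPFeasible G L k (δ + G.dist a b) (shiftX x y a b α) (shiftY y a b α) ∧
    (∀ v, v ≠ b → lpRadius G (shiftX x y a b α) v ≤ lpRadius G x v) ∧
    lpRadius G (shiftX x y a b α) b ≤
      max (lpRadius G x a + G.dist a b) (lpRadius G x b) :=
  shifting_lemma_general G hG L k δ x y hfeas a b hab hL α hα0 hα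
end

section
/- Let (x, y) be a δ-feasible assignment and let F be an acyclic y-flow from S to T. Let (x', y') be the result of the chain shifting operation on (x, y) according to F, and let d be the greatest distance in G between two vertices joined by an arc of G_F. Then (x', y') is a (δ + d)-feasible assignment; for each vertex v of indegree zero in G_F, radius_{(x',y')}(v) ≤ radius_{(x,y)}(v); for every other vertex v, radius_{(x',y')}(v) ≤ max(radius_{(x,y)}(v), max over in-neighbors a of v in G_F of (radius_{(x,y)}(a) + dist_G(a, v))); and for every v ∈ V \ (S ∪ T), y'_v = y_v. -/
/-- `u` and `v` occur as consecutive vertices (in this order) on the flow path `q`. -/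
def ConsecOn {V : Type} (q : ℝ × List V) (u v : V) : Prop :=
  (u, v) ∈ q.2.zip q.2.tail

instance {V : Type} [DecidableEq V] (q : ℝ × List V) (u v : V) :
    Decidable (ConsecOn q u v) :=
  inferInstanceAs (Decidable ((u, v) ∈ q.2.zip q.2.tail))

/-- The arc relation of the auxiliary directed graph `G_F` of a flow `F`: there is an arc
`(u, v)` iff some path of `F` contains `u` and `v` as consecutive vertices in this
order. -/
def ArcOf {V : Type} (F : Finset (ℝ × List V)) (u v : V) : Prop :=
  ∃ q ∈ F, ConsecOn q u v

/-- `F` is a `y`-flow from `S` to `T` (for disjoint `S, T ⊆ V`): a finite set of flow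
paths `(α, v₁, …, v_t)` with `α > 0`, `v₁ ∈ S`, `v_t ∈ T`, `L v₁ ≤ L v_t`, every internal
vertex `v` satisfying `v ∉ S ∪ T`, `y v = 1` and `L v₁ ≤ L v`, such that at most `y v`
units leave each `v ∈ S`, at most `1 - y v` units enter each `v ∈ T`, and at most `1` unit
passes through each `v ∉ S ∪ T`. -/
def IsYFlow {V : Type} [DecidableEq V] (L : V → ℕ) (y : V → ℝ) (S T : Set V)
    (F : Finset (ℝ × List V)) : Prop :=
  (∀ q ∈ F, 0 < q.1 ∧ ∃ (v₁ vt : V) (mid : List V),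
      q.2 = v₁ :: (mid ++ [vt]) ∧ v₁ ∈ S ∧ vt ∈ T ∧ L v₁ ≤ L vt ∧
      ∀ v ∈ mid, v ∉ S ∧ v ∉ T ∧ y v = 1 ∧ L v₁ ≤ L v) ∧
  (∀ v ∈ S, ∑ q ∈ F.filter (fun q => q.2.head? = some v), q.1 ≤ y v) ∧
  (∀ v ∈ T, ∑ q ∈ F.filter (fun q => q.2.getLast? = some v), q.1 ≤ 1 - y v) ∧
  (∀ v : V, v ∉ S → v ∉ T → ∑ q ∈ F.filter (fun q => v ∈ q.2), q.1 ≤ 1)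

/-- The flow `F` is acyclic: its auxiliary directed graph `G_F` has no directed cycle. -/
def AcyclicFlow {V : Type} (F : Finset (ℝ × List V)) : Prop :=
  ∀ v : V, ¬ Relation.TransGen (ArcOf F) v v

/-- `f_F(u, v)`: the total of `α` over the paths of `F` containing `u, v` consecutively
(the fractional number of centers transferred from `u` to `v`). -/
noncomputable def fF {V : Type} [DecidableEq V] (F : Finset (ℝ × List V)) (u v : V) : ℝ :=
  ∑ q ∈ F.filter (fun q => ConsecOn q u v), q.1

/-- `fl_F(u, v)`: the total of `L s * α` over the paths of `F` containing `u, v`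
consecutively, `s` being the starting vertex of the path (the fractional number of clients
transferred from `u` to `v`). -/
noncomputable def flF {V : Type} [DecidableEq V] (L : V → ℕ) (F : Finset (ℝ × List V))
    (u v : V) : ℝ :=
  ∑ q ∈ F.filter (fun q => ConsecOn q u v), (((q.2.head?.map L).getD 0 : ℕ) : ℝ) * q.1

/-- The `x`-part of the result of the chain-shifting operation along the flow `F`:
`x u v` gains `fl_F(a, u) * x a v / (L a * y a)` for every in-neighbour `a` of `u` in
`G_F` and loses `fl_F(u, a) * x u v / (L u * y u)` for every out-neighbour `a`. -/
noncomputable def chainX {V : Type} [Fintype V] [DecidableEq V] (L : V → ℕ)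
    (F : Finset (ℝ × List V)) (x : V → V → ℝ) (y : V → ℝ) : V → V → ℝ :=
  fun u v => x u v
    + ∑ a : V, flF L F a u * x a v / ((L a : ℝ) * y a)
    - (∑ a : V, flF L F u a) * x u v / ((L u : ℝ) * y u)

/-- The `y`-part of the result of the chain-shifting operation along the flow `F`:
each source `s ∈ S` loses the total `f_F`-outflow of `s` and each sink `t ∈ T` gains the
total `f_F`-inflow of `t`. -/
noncomputable def chainY {V : Type} [Fintype V] [DecidableEq V]
    (F : Finset (ℝ × List V)) (y : V → ℝ) (S T : Finset V) : V → ℝ :=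
  fun u =>
    if u ∈ S then y u - ∑ a : V, fF F u a
    else if u ∈ T then y u + ∑ a : V, fF F a u
    else y u

/-! The shifted assignment is the redistribution
`x' u v = (1 - ∑ b, ρ u b) * x u v + ∑ a, ρ a u * x a v`, where `ρ a b = fl_F(a, b) / (L a * y a)`
and `∑ b, ρ a b ≤ 1`. It keeps the total assignment of every client, and a client served by `u`
afterwards was served before by `u` or by an in-neighbour of `u` in `G_F`: this gives the
distance and radius bounds. Acyclicity makes every flow path simple, so summing `f_F` or `fl_F`
over the arcs at a vertex counts each path through it once. The bounds `x' ≤ y'` and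
`∑ x' ≤ L y'` are then checked separately at sources (which only lose clients, in proportion to
their outflow), at sinks (which only gain, at most `f_F(a, u)` from each `a`) and at internal
vertices (where `y = 1` and the load `fl_F` is conserved). -/

namespace List
variable {α : Type*} {l : List α} {a b c : α}

theorem mem_zip_tail_iff :
    (a, b) ∈ l.zip l.tail ↔ ∃ (i : ℕ) (h : i + 1 < l.length), l[i] = a ∧ l[i + 1] = b := by
  simp only [mem_iff_getElem, getElem_zip, getElem_tail, length_zip, length_tail,
    Prod.mk.injEq]
  exact ⟨fun ⟨i, hi, h⟩ => ⟨i, by omega, h⟩, fun ⟨i, hi, h⟩ => ⟨i, by omega, h⟩⟩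

theorem mem_dropLast_iff_exists_mem_zip_tail :
    a ∈ l.dropLast ↔ ∃ b, (a, b) ∈ l.zip l.tail := by
  rw [mem_iff_getElem]
  simp only [mem_zip_tail_iff, getElem_dropLast, length_dropLast]
  exact ⟨fun ⟨i, hi, h⟩ => ⟨_, i, by omega, h, rfl⟩, fun ⟨_, i, hi, h, _⟩ => ⟨i, by omega, h⟩⟩

theorem mem_tail_iff_exists_mem_zip_tail : b ∈ l.tail ↔ ∃ a, (a, b) ∈ l.zip l.tail := by
  rw [mem_iff_getElem]
  simp only [mem_zip_tail_iff, getElem_tail, length_tail]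
  exact ⟨fun ⟨i, hi, h⟩ => ⟨_, i, by omega, rfl, h⟩, fun ⟨_, i, hi, _, h⟩ => ⟨i, by omega, h⟩⟩

theorem Nodup.eq_of_mem_zip_tail_left (hl : l.Nodup) (h₁ : (a, b) ∈ l.zip l.tail)
    (h₂ : (a, c) ∈ l.zip l.tail) : b = c := by
  obtain ⟨i, hi, rfl, rfl⟩ := mem_zip_tail_iff.1 h₁
  obtain ⟨j, hj, hij, rfl⟩ := mem_zip_tail_iff.1 h₂
  obtain rfl : j = i := hl.getElem_inj_iff.1 hij
  rfl

theorem Nodup.eq_of_mem_zip_tail_right (hl : l.Nodup) (h₁ : (a, c) ∈ l.zip l.tail)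
    (h₂ : (b, c) ∈ l.zip l.tail) : a = b := by
  obtain ⟨i, hi, rfl, rfl⟩ := mem_zip_tail_iff.1 h₁
  obtain ⟨j, hj, rfl, hij⟩ := mem_zip_tail_iff.1 h₂
  obtain rfl : j = i := by simpa using hl.getElem_inj_iff.1 hij
  rfl

theorem isChain_of_forall_mem_zip_tail {R : α → α → Prop}
    (h : ∀ a b, (a, b) ∈ l.zip l.tail → R a b) : l.IsChain R :=
  isChain_iff_getElem.2 fun i hi => h _ _ (mem_zip_tail_iff.2 ⟨i, hi, rfl, rfl⟩)

end List

section ArcWeight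
variable {V : Type} [DecidableEq V] {L : V → ℕ} {F : Finset (ℝ × List V)} {a b : V}

def arcWeight (F : Finset (ℝ × List V)) (w : ℝ × List V → ℝ) (a b : V) : ℝ :=
  ∑ q ∈ F.filter (fun q => ConsecOn q a b), w q

def sourceCapacity (L : V → ℕ) (q : ℝ × List V) : ℕ := (q.2.head?.map L).getD 0

theorem fF_eq_arcWeight : fF F = arcWeight F Prod.fst := rfl

theorem flF_eq_arcWeight :
    flF L F = arcWeight F fun q => (sourceCapacity L q : ℝ) * q.1 := rfl

theorem arcWeight_eq_zero_of_not_arcOf {w : ℝ × List V → ℝ} (h : ¬ ArcOf F a b) :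
    arcWeight F w a b = 0 :=
  Finset.sum_eq_zero fun q hq => absurd ⟨q, Finset.mem_filter.1 hq⟩ h

theorem arcWeight_nonneg {w : ℝ × List V → ℝ} (hw : ∀ q ∈ F, 0 ≤ w q) :
    0 ≤ arcWeight F w a b :=
  Finset.sum_nonneg fun q hq => hw q (Finset.mem_filter.1 hq).1

variable [Fintype V]

theorem sum_arcWeight_right (hnd : ∀ q ∈ F, q.2.Nodup) (w : ℝ × List V → ℝ) (a : V) :
    ∑ b, arcWeight F w a b = ∑ q ∈ F.filter (fun q => a ∈ q.2.dropLast), w q := by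
  simp only [arcWeight, Finset.sum_filter]
  rw [Finset.sum_comm]
  refine Finset.sum_congr rfl fun q hq => ?_
  rw [Finset.sum_ite_zero _ (ConsecOn q a) fun _ _ _ _ => (hnd q hq).eq_of_mem_zip_tail_left]
  simp [ConsecOn, List.mem_dropLast_iff_exists_mem_zip_tail]

theorem sum_arcWeight_left (hnd : ∀ q ∈ F, q.2.Nodup) (w : ℝ × List V → ℝ) (b : V) :
    ∑ a, arcWeight F w a b = ∑ q ∈ F.filter (fun q => b ∈ q.2.tail), w q := by
  simp only [arcWeight, Finset.sum_filter]
  rw [Finset.sum_comm]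
  refine Finset.sum_congr rfl fun q hq => ?_
  rw [Finset.sum_ite_zero _ (ConsecOn q · b) fun _ _ _ _ => (hnd q hq).eq_of_mem_zip_tail_right]
  simp [ConsecOn, List.mem_tail_iff_exists_mem_zip_tail]

end ArcWeight

namespace AcyclicFlow
variable {V : Type} {F : Finset (ℝ × List V)} {q : ℝ × List V}

theorem not_arcOf_self (h : AcyclicFlow F) (u : V) : ¬ ArcOf F u u :=
  fun hu => h u (.single hu)

theorem nodup (h : AcyclicFlow F) (hq : q ∈ F) : q.2.Nodup := by
  have : IsTrans V (Relation.TransGen (ArcOf F)) := ⟨fun _ _ _ => .trans⟩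
  have hchain : q.2.IsChain (Relation.TransGen (ArcOf F)) :=
    List.isChain_of_forall_mem_zip_tail fun _ _ hab => .single ⟨q, hq, hab⟩
  refine (List.isChain_iff_pairwise.1 hchain).imp fun {c d} hcd hc => ?_
  subst hc
  exact h c hcd

end AcyclicFlow

namespace IsYFlow
variable {V : Type} [DecidableEq V] {L : V → ℕ} {y : V → ℝ} {S T : Finset V}
  {F : Finset (ℝ × List V)} {q : ℝ × List V} {u a b : V}

theorem fst_pos (hF : IsYFlow L y ↑S ↑T F) (hq : q ∈ F) : 0 < q.1 := (hF.1 q hq).1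

theorem notMem_source_of_mem_tail (hF : IsYFlow L y ↑S ↑T F) (hST : Disjoint S T)
    (hq : q ∈ F) (hu : u ∈ q.2.tail) : u ∉ S := by
  obtain ⟨-, s, t, mid, hq2, -, ht, -, hmid⟩ := hF.1 q hq
  simp only [hq2, List.tail_cons, List.mem_append, List.mem_singleton] at hu
  rcases hu with hu | rfl
  · exact (hmid u hu).1
  · exact Finset.disjoint_right.1 hST ht

theorem notMem_sink_of_mem_dropLast (hF : IsYFlow L y ↑S ↑T F) (hST : Disjoint S T)
    (hq : q ∈ F) (hu : u ∈ q.2.dropLast) : u ∉ T := by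
  obtain ⟨-, s, t, mid, hq2, hs, -, -, hmid⟩ := hF.1 q hq
  rw [hq2, ← List.cons_append, List.dropLast_concat, List.mem_cons] at hu
  rcases hu with rfl | hu
  · exact Finset.disjoint_left.1 hST hs
  · exact (hmid u hu).2.1

theorem mem_dropLast_iff_of_mem_source (hF : IsYFlow L y ↑S ↑T F) (hq : q ∈ F)
    (hu : u ∈ S) : u ∈ q.2.dropLast ↔ q.2.head? = some u := by
  obtain ⟨-, s, t, mid, hq2, -, -, -, hmid⟩ := hF.1 q hq
  rw [hq2, List.head?_cons, Option.some_inj, eq_comm, ← List.cons_append,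
    List.dropLast_concat, List.mem_cons]
  exact ⟨fun h => h.resolve_right fun hm => (hmid u hm).1 hu, .inl⟩

theorem mem_tail_iff_of_mem_sink (hF : IsYFlow L y ↑S ↑T F) (hq : q ∈ F) (hu : u ∈ T) :
    u ∈ q.2.tail ↔ q.2.getLast? = some u := by
  obtain ⟨-, s, t, mid, hq2, -, -, -, hmid⟩ := hF.1 q hq
  rw [hq2, List.tail_cons, ← List.cons_append, List.getLast?_concat, Option.some_inj,
    List.mem_append, List.mem_singleton]
  exact ⟨fun h => (h.resolve_left fun hm => (hmid u hm).2.1 hu).symm, fun h => .inr h.symm⟩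

theorem mem_tail_iff_mem_dropLast (hF : IsYFlow L y ↑S ↑T F) (hq : q ∈ F) (huS : u ∉ S)
    (huT : u ∉ T) : u ∈ q.2.tail ↔ u ∈ q.2.dropLast := by
  obtain ⟨-, s, t, mid, hq2, hs, ht, -, -⟩ := hF.1 q hq
  rw [hq2, List.tail_cons, ← List.cons_append, List.dropLast_concat]
  have hus : u ≠ s := fun h => huS (h ▸ hs)
  have hut : u ≠ t := fun h => huT (h ▸ ht)
  simp [hus, hut]

theorem sourceCapacity_le (hF : IsYFlow L y ↑S ↑T F) (hq : q ∈ F) (hu : u ∈ q.2) :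
    sourceCapacity L q ≤ L u := by
  obtain ⟨-, s, t, mid, hq2, -, -, hst, hmid⟩ := hF.1 q hq
  simp only [hq2, List.mem_cons, List.mem_append, List.not_mem_nil, or_false] at hu
  simp only [sourceCapacity, hq2, List.head?_cons, Option.map_some, Option.getD_some]
  rcases hu with rfl | hu | rfl
  exacts [le_rfl, (hmid u hu).2.2.2, hst]

theorem y_eq_one_of_mem (hF : IsYFlow L y ↑S ↑T F) (hq : q ∈ F) (hu : u ∈ q.2)
    (huS : u ∉ S) (huT : u ∉ T) : y u = 1 := by
  obtain ⟨-, s, t, mid, hq2, hs, ht, -, hmid⟩ := hF.1 q hq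
  simp only [hq2, List.mem_cons, List.mem_append, List.not_mem_nil, or_false] at hu
  rcases hu with rfl | hu | rfl
  exacts [absurd hs huS, (hmid u hu).2.2.1, absurd ht huT]

theorem notMem_source_of_arcOf (hF : IsYFlow L y ↑S ↑T F) (hST : Disjoint S T)
    (h : ArcOf F a u) : u ∉ S :=
  let ⟨_, hq, hc⟩ := h
  hF.notMem_source_of_mem_tail hST hq (List.of_mem_zip hc).2

theorem notMem_sink_of_arcOf (hF : IsYFlow L y ↑S ↑T F) (hST : Disjoint S T)
    (h : ArcOf F u b) : u ∉ T :=
  let ⟨_, hq, hc⟩ := h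
  hF.notMem_sink_of_mem_dropLast hST hq (List.mem_dropLast_iff_exists_mem_zip_tail.2 ⟨b, hc⟩)

theorem y_eq_one_of_arcOf (hF : IsYFlow L y ↑S ↑T F) (h : ArcOf F a u) (huS : u ∉ S)
    (huT : u ∉ T) : y u = 1 :=
  let ⟨_, hq, hc⟩ := h
  hF.y_eq_one_of_mem hq (List.mem_of_mem_tail (List.of_mem_zip hc).2) huS huT

theorem fF_nonneg (hF : IsYFlow L y ↑S ↑T F) : 0 ≤ fF F a b :=
  arcWeight_nonneg fun _ hq => (hF.fst_pos hq).le

theorem flF_nonneg (hF : IsYFlow L y ↑S ↑T F) : 0 ≤ flF L F a b :=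
  arcWeight_nonneg fun _ hq => mul_nonneg (Nat.cast_nonneg _) (hF.fst_pos hq).le

theorem flF_le_mul_fF {c : ℕ} (hF : IsYFlow L y ↑S ↑T F)
    (hc : ∀ q ∈ F, ConsecOn q a b → sourceCapacity L q ≤ c) :
    flF L F a b ≤ c * fF F a b := by
  rw [fF, flF, Finset.mul_sum]
  refine Finset.sum_le_sum fun q hq => ?_
  obtain ⟨hqF, hab⟩ := Finset.mem_filter.1 hq
  exact mul_le_mul_of_nonneg_right (Nat.cast_le.2 (hc q hqF hab)) (hF.fst_pos hqF).le

theorem flF_le_mul_fF_left (hF : IsYFlow L y ↑S ↑T F) : flF L F a b ≤ L a * fF F a b :=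
  hF.flF_le_mul_fF fun _ hq hab => hF.sourceCapacity_le hq (List.of_mem_zip hab).1

theorem flF_le_mul_fF_right (hF : IsYFlow L y ↑S ↑T F) : flF L F a b ≤ L b * fF F a b :=
  hF.flF_le_mul_fF fun _ hq hab =>
    hF.sourceCapacity_le hq (List.mem_of_mem_tail (List.of_mem_zip hab).2)

theorem flF_eq_mul_fF_of_mem_source (hF : IsYFlow L y ↑S ↑T F) (hu : u ∈ S) :
    flF L F u b = L u * fF F u b := by
  rw [fF, flF, Finset.mul_sum]
  refine Finset.sum_congr rfl fun q hq => ?_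
  obtain ⟨hqF, hub⟩ := Finset.mem_filter.1 hq
  have hhead : q.2.head? = some u := (hF.mem_dropLast_iff_of_mem_source hqF hu).1
    (List.mem_dropLast_iff_exists_mem_zip_tail.2 ⟨b, hub⟩)
  simp [hhead]

variable [Fintype V]

theorem sum_fF_right_of_mem_source (hF : IsYFlow L y ↑S ↑T F) (hacyc : AcyclicFlow F)
    (hu : u ∈ S) :
    ∑ b, fF F u b = ∑ q ∈ F.filter (fun q => q.2.head? = some u), q.1 := by
  rw [fF_eq_arcWeight, sum_arcWeight_right (fun _ => hacyc.nodup),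
    Finset.filter_congr fun q hq => hF.mem_dropLast_iff_of_mem_source hq hu]

theorem sum_fF_left_of_mem_sink (hF : IsYFlow L y ↑S ↑T F) (hacyc : AcyclicFlow F)
    (hu : u ∈ T) :
    ∑ a, fF F a u = ∑ q ∈ F.filter (fun q => q.2.getLast? = some u), q.1 := by
  rw [fF_eq_arcWeight, sum_arcWeight_left (fun _ => hacyc.nodup),
    Finset.filter_congr fun q hq => hF.mem_tail_iff_of_mem_sink hq hu]

theorem sum_fF_right_le (hF : IsYFlow L y ↑S ↑T F) (hST : Disjoint S T)
    (hacyc : AcyclicFlow F) (hy : 0 ≤ y u) : ∑ b, fF F u b ≤ y u := by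
  by_cases huS : u ∈ S
  · rw [hF.sum_fF_right_of_mem_source hacyc huS]
    exact hF.2.1 u huS
  rw [fF_eq_arcWeight, sum_arcWeight_right (fun _ => hacyc.nodup)]
  by_cases huT : u ∈ T
  · rwa [Finset.filter_false_of_mem fun q hq h =>
      hF.notMem_sink_of_mem_dropLast hST hq h huT, Finset.sum_empty]
  rcases (F.filter fun q => u ∈ q.2.dropLast).eq_empty_or_nonempty with he | ⟨q, hq⟩
  · rwa [he, Finset.sum_empty]
  obtain ⟨hqF, hu⟩ := Finset.mem_filter.1 hq
  rw [hF.y_eq_one_of_mem hqF (List.dropLast_subset _ hu) huS huT]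
  refine le_trans (Finset.sum_le_sum_of_subset_of_nonneg ?_ fun q hq _ => ?_)
    (hF.2.2.2 u huS huT)
  · intro q hq
    simp only [Finset.mem_filter] at hq ⊢
    exact ⟨hq.1, List.dropLast_subset _ hq.2⟩
  · exact (hF.fst_pos (Finset.mem_filter.1 hq).1).le

theorem sum_fF_left_le_of_mem_sink (hF : IsYFlow L y ↑S ↑T F) (hacyc : AcyclicFlow F)
    (hu : u ∈ T) : ∑ a, fF F a u ≤ 1 - y u := by
  rw [hF.sum_fF_left_of_mem_sink hacyc hu]
  exact hF.2.2.1 u hu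

theorem sum_source_sum_fF (hF : IsYFlow L y ↑S ↑T F) (hacyc : AcyclicFlow F) :
    ∑ u ∈ S, ∑ b, fF F u b = ∑ q ∈ F, q.1 := by
  rw [Finset.sum_congr rfl fun u hu => hF.sum_fF_right_of_mem_source hacyc hu]
  simp only [Finset.sum_filter]
  rw [Finset.sum_comm]
  refine Finset.sum_congr rfl fun q hq => ?_
  obtain ⟨-, s, t, mid, hq2, hs, -⟩ := hF.1 q hq
  simp [hq2, Finset.mem_coe.1 hs]

theorem sum_sink_sum_fF (hF : IsYFlow L y ↑S ↑T F) (hacyc : AcyclicFlow F) :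
    ∑ u ∈ T, ∑ a, fF F a u = ∑ q ∈ F, q.1 := by
  rw [Finset.sum_congr rfl fun u hu => hF.sum_fF_left_of_mem_sink hacyc hu]
  simp only [Finset.sum_filter]
  rw [Finset.sum_comm]
  refine Finset.sum_congr rfl fun q hq => ?_
  obtain ⟨-, s, t, mid, hq2, -, ht, -⟩ := hF.1 q hq
  rw [hq2, ← List.cons_append, List.getLast?_concat]
  simp [Finset.mem_coe.1 ht]

theorem sum_flF_left_eq_right (hF : IsYFlow L y ↑S ↑T F) (hacyc : AcyclicFlow F)
    (huS : u ∉ S) (huT : u ∉ T) : ∑ a, flF L F a u = ∑ b, flF L F u b := by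
  rw [flF_eq_arcWeight, sum_arcWeight_left (fun _ => hacyc.nodup),
    sum_arcWeight_right (fun _ => hacyc.nodup)]
  exact Finset.sum_congr
    (Finset.filter_congr fun q hq => hF.mem_tail_iff_mem_dropLast hq huS huT) fun _ _ => rfl

end IsYFlow

section Redistribute
variable {V : Type} [Fintype V] (ρ x : V → V → ℝ)

def redistribute (u v : V) : ℝ := (1 - ∑ b, ρ u b) * x u v + ∑ a, ρ a u * x a v

theorem sum_redistribute_left (v : V) : ∑ u, redistribute ρ x u v = ∑ u, x u v := by
  simp only [redistribute, Finset.sum_add_distrib, sub_mul, one_mul, Finset.sum_sub_distrib,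
    Finset.sum_mul]
  rw [Finset.sum_comm (f := fun u a => ρ a u * x a v)]
  ring

theorem sum_redistribute_right (u : V) : ∑ v, redistribute ρ x u v =
    (1 - ∑ b, ρ u b) * ∑ v, x u v + ∑ a, ρ a u * ∑ v, x a v := by
  simp only [redistribute, Finset.sum_add_distrib, Finset.mul_sum]
  rw [Finset.sum_comm]

variable {ρ x} {u v : V}

theorem redistribute_nonneg (hρ : ∀ a, 0 ≤ ρ a u) (hρ1 : ∑ b, ρ u b ≤ 1)
    (hx : ∀ a, 0 ≤ x a v) : 0 ≤ redistribute ρ x u v :=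
  add_nonneg (mul_nonneg (sub_nonneg.2 hρ1) (hx u))
    (Finset.sum_nonneg fun a _ => mul_nonneg (hρ a) (hx a))

theorem redistribute_le_add (hρ : ∀ b, 0 ≤ ρ u b) (hx : 0 ≤ x u v) :
    redistribute ρ x u v ≤ x u v + ∑ a, ρ a u * x a v := by
  have := mul_nonneg (Finset.sum_nonneg fun b (_ : b ∈ Finset.univ) => hρ b) hx
  rw [redistribute]
  linarith

theorem pos_or_exists_of_redistribute_pos (hρ : ∀ a, 0 ≤ ρ a u) (hx : ∀ a, 0 ≤ x a v)
    (h : 0 < redistribute ρ x u v) : 0 < x u v ∨ ∃ a, 0 < ρ a u ∧ 0 < x a v := by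
  by_contra! hcon
  have hxu : x u v = 0 := le_antisymm hcon.1 (hx u)
  have hterm (a : V) : ρ a u * x a v = 0 := by
    rcases (hρ a).eq_or_lt with ha | ha
    · rw [← ha, zero_mul]
    · rw [le_antisymm (hcon.2 a ha) (hx a), mul_zero]
  simp [redistribute, hxu, hterm] at h

end Redistribute

section TransferRatio
variable {V : Type} [DecidableEq V] {L : V → ℕ} {y : V → ℝ} {S T : Finset V}
  {F : Finset (ℝ × List V)} {a b : V}

/-- The share of the clients of `a` that the chain shifting operation moves along the arc
`(a, b)`. -/
noncomputable def transferRatio (L : V → ℕ) (F : Finset (ℝ × List V)) (y : V → ℝ)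
    (a b : V) : ℝ :=
  flF L F a b / (L a * y a)

theorem chainX_eq_redistribute [Fintype V] (x : V → V → ℝ) :
    chainX L F x y = redistribute (transferRatio L F y) x := by
  ext u v
  simp only [chainX, redistribute, transferRatio, ← Finset.sum_div]
  simp only [div_mul_eq_mul_div]
  ring

theorem transferRatio_eq_zero_of_not_arcOf (h : ¬ ArcOf F a b) :
    transferRatio L F y a b = 0 := by
  rw [transferRatio, flF_eq_arcWeight, arcWeight_eq_zero_of_not_arcOf h, zero_div]

theorem arcOf_of_transferRatio_pos (h : 0 < transferRatio L F y a b) : ArcOf F a b :=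
  not_not.1 fun h' => h.ne' (transferRatio_eq_zero_of_not_arcOf h')

namespace IsYFlow

theorem transferRatio_nonneg (hF : IsYFlow L y ↑S ↑T F) (hy : 0 ≤ y a) :
    0 ≤ transferRatio L F y a b :=
  div_nonneg hF.flF_nonneg (mul_nonneg (Nat.cast_nonneg _) hy)

theorem transferRatio_mul_le_fF (hF : IsYFlow L y ↑S ↑T F) :
    transferRatio L F y a b * y a ≤ fF F a b := by
  rcases (L a).eq_zero_or_pos with hL | hL
  · simp [transferRatio, hL, hF.fF_nonneg]
  have hL' : (0 : ℝ) < L a := Nat.cast_pos.2 hL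
  refine le_of_mul_le_mul_left ?_ hL'
  rcases eq_or_ne (y a) 0 with hy | hy
  · simpa [hy] using mul_nonneg hL'.le hF.fF_nonneg
  calc (L a : ℝ) * (transferRatio L F y a b * y a) = flF L F a b := by
        rw [transferRatio]; field_simp
    _ ≤ L a * fF F a b := hF.flF_le_mul_fF_left

variable [Fintype V]

theorem sum_flF_right_le (hF : IsYFlow L y ↑S ↑T F) (hST : Disjoint S T)
    (hacyc : AcyclicFlow F) (hy : 0 ≤ y a) : ∑ b, flF L F a b ≤ L a * y a :=
  calc ∑ b, flF L F a b ≤ ∑ b, (L a : ℝ) * fF F a b :=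
        Finset.sum_le_sum fun _ _ => hF.flF_le_mul_fF_left
    _ ≤ L a * y a := by
        rw [← Finset.mul_sum]
        exact mul_le_mul_of_nonneg_left (hF.sum_fF_right_le hST hacyc hy) (Nat.cast_nonneg _)

theorem transferRatio_mul (hF : IsYFlow L y ↑S ↑T F) (hST : Disjoint S T)
    (hacyc : AcyclicFlow F) (hy : 0 ≤ y a) :
    transferRatio L F y a b * (L a * y a) = flF L F a b := by
  rcases eq_or_ne ((L a : ℝ) * y a) 0 with h | h
  · rw [h, mul_zero]
    refine le_antisymm hF.flF_nonneg ?_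
    calc flF L F a b ≤ ∑ b, flF L F a b :=
          Finset.single_le_sum (f := flF L F a) (fun _ _ => hF.flF_nonneg) (Finset.mem_univ b)
      _ ≤ 0 := h ▸ hF.sum_flF_right_le hST hacyc hy
  · exact div_mul_cancel₀ _ h

theorem sum_transferRatio_mul (hF : IsYFlow L y ↑S ↑T F) (hST : Disjoint S T)
    (hacyc : AcyclicFlow F) (hy : 0 ≤ y a) :
    (∑ b, transferRatio L F y a b) * (L a * y a) = ∑ b, flF L F a b := by
  rw [Finset.sum_mul]
  exact Finset.sum_congr rfl fun b _ => hF.transferRatio_mul hST hacyc hy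

theorem sum_transferRatio_le_one (hF : IsYFlow L y ↑S ↑T F) (hST : Disjoint S T)
    (hacyc : AcyclicFlow F) (hy : 0 ≤ y a) : ∑ b, transferRatio L F y a b ≤ 1 := by
  simp only [transferRatio, ← Finset.sum_div]
  exact div_le_one_of_le₀ (hF.sum_flF_right_le hST hacyc hy)
    (mul_nonneg (Nat.cast_nonneg _) hy)

end IsYFlow
end TransferRatio

section ChainY
variable {V : Type} [Fintype V] [DecidableEq V] {L : V → ℕ} {y : V → ℝ} {S T : Finset V}
  {F : Finset (ℝ × List V)} {u : V}

theorem chainY_of_mem_source (hu : u ∈ S) : chainY F y S T u = y u - ∑ b, fF F u b :=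
  if_pos hu

theorem chainY_of_mem_sink (hST : Disjoint S T) (hu : u ∈ T) :
    chainY F y S T u = y u + ∑ a, fF F a u := by
  rw [chainY, if_neg (Finset.disjoint_right.1 hST hu), if_pos hu]

theorem chainY_of_notMem (huS : u ∉ S) (huT : u ∉ T) : chainY F y S T u = y u := by
  rw [chainY, if_neg huS, if_neg huT]

namespace IsYFlow

theorem sum_chainY (hF : IsYFlow L y ↑S ↑T F) (hST : Disjoint S T) (hacyc : AcyclicFlow F) :
    ∑ u, chainY F y S T u = ∑ u, y u := by
  have hsplit (u : V) : chainY F y S T u = y u - (if u ∈ S then ∑ b, fF F u b else 0) +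
      (if u ∈ T then ∑ a, fF F a u else 0) := by
    by_cases huS : u ∈ S
    · simp [chainY_of_mem_source huS, huS, Finset.disjoint_left.1 hST huS]
    by_cases huT : u ∈ T
    · simp [chainY_of_mem_sink hST huT, huS, huT]
    · simp [chainY_of_notMem huS huT, huS, huT]
  simp only [hsplit, Finset.sum_add_distrib, Finset.sum_sub_distrib, Finset.sum_ite_mem,
    Finset.univ_inter, hF.sum_source_sum_fF hacyc, hF.sum_sink_sum_fF hacyc, sub_add_cancel]

theorem chainY_nonneg (hF : IsYFlow L y ↑S ↑T F) (hST : Disjoint S T) (hacyc : AcyclicFlow F)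
    (hy : 0 ≤ y u) : 0 ≤ chainY F y S T u := by
  by_cases huS : u ∈ S
  · rw [chainY_of_mem_source huS]
    exact sub_nonneg.2 (hF.sum_fF_right_le hST hacyc hy)
  by_cases huT : u ∈ T
  · rw [chainY_of_mem_sink hST huT]
    exact add_nonneg hy (Finset.sum_nonneg fun _ _ => hF.fF_nonneg)
  · rwa [chainY_of_notMem huS huT]

theorem chainY_le_one (hF : IsYFlow L y ↑S ↑T F) (hST : Disjoint S T) (hacyc : AcyclicFlow F)
    (hy : y u ≤ 1) : chainY F y S T u ≤ 1 := by
  by_cases huS : u ∈ S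
  · rw [chainY_of_mem_source huS]
    linarith [Finset.sum_nonneg fun b (_ : b ∈ Finset.univ) => hF.fF_nonneg (a := u) (b := b)]
  by_cases huT : u ∈ T
  · rw [chainY_of_mem_sink hST huT]
    linarith [hF.sum_fF_left_le_of_mem_sink hacyc huT]
  · rwa [chainY_of_notMem huS huT]

end IsYFlow
end ChainY

section Radius
variable {V : Type} {G : SimpleGraph V} {x : V → V → ℝ} {v w : V}

theorem lpRadius_le {n : ℕ} (h : ∀ w, 0 < x v w → G.dist v w ≤ n) : lpRadius G x v ≤ n :=
  csSup_le' <| by rintro _ ⟨w, rfl, hw⟩; exact h w hw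

theorem dist_le_lpRadius [Finite V] (h : 0 < x v w) : G.dist v w ≤ lpRadius G x v :=
  le_csSup ((Set.finite_range (G.dist v)).subset
    (by rintro _ ⟨w, rfl, -⟩; exact ⟨w, rfl⟩)).bddAbove ⟨w, rfl, h⟩

end Radius

namespace LPFeasible
variable {V : Type} [Fintype V] {G : SimpleGraph V} {L : V → ℕ} {k δ d : ℕ}
  {x : V → V → ℝ} {y : V → ℝ} {S T : Finset V} {F : Finset (ℝ × List V)} {u v : V}

theorem dist_le_of_pos (hfeas : LPFeasible G L k δ x y) (h : 0 < x u v) : G.dist u v ≤ δ :=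
  not_lt.1 fun hlt => h.ne' (hfeas.2.2.2.2.2.2.2 u v fun hr => hlt.not_ge hr.2)

variable [DecidableEq V]

theorem chainX_le_of_mem_source (hfeas : LPFeasible G L k δ x y) (hF : IsYFlow L y ↑S ↑T F)
    (hST : Disjoint S T) (hacyc : AcyclicFlow F) (hu : u ∈ S) :
    chainX L F x y u v ≤ y u - ∑ b, fF F u b := by
  obtain ⟨hx0, hy0, -, hxy, hcap, -⟩ := hfeas
  have hin (a : V) : transferRatio L F y a u = 0 :=
    transferRatio_eq_zero_of_not_arcOf fun h => hF.notMem_source_of_arcOf hST h hu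
  simp only [chainX_eq_redistribute, redistribute, hin, zero_mul, Finset.sum_const_zero,
    add_zero]
  rcases (L u).eq_zero_or_pos with hL | hL
  · have hxu : x u v = 0 := le_antisymm ((Finset.single_le_sum (fun w _ => hx0 u w)
      (Finset.mem_univ v)).trans (by simpa [hL] using hcap u)) (hx0 u v)
    rw [hxu, mul_zero]
    exact sub_nonneg.2 (hF.sum_fF_right_le hST hacyc (hy0 u))
  have hout : (∑ b, transferRatio L F y u b) * y u = ∑ b, fF F u b := by
    refine mul_left_cancel₀ (Nat.cast_pos.2 hL).ne' ?_
    rw [mul_left_comm, hF.sum_transferRatio_mul hST hacyc (hy0 u), Finset.mul_sum]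
    exact Finset.sum_congr rfl fun b _ => hF.flF_eq_mul_fF_of_mem_source hu
  calc (1 - ∑ b, transferRatio L F y u b) * x u v
      ≤ (1 - ∑ b, transferRatio L F y u b) * y u :=
        mul_le_mul_of_nonneg_left (hxy u v)
          (sub_nonneg.2 (hF.sum_transferRatio_le_one hST hacyc (hy0 u)))
    _ = y u - ∑ b, fF F u b := by rw [sub_mul, one_mul, hout]

theorem chainX_le_of_mem_sink (hfeas : LPFeasible G L k δ x y) (hF : IsYFlow L y ↑S ↑T F)
    (hST : Disjoint S T) (hu : u ∈ T) : chainX L F x y u v ≤ y u + ∑ a, fF F a u := by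
  obtain ⟨-, hy0, -, hxy, -⟩ := hfeas
  have hout (b : V) : transferRatio L F y u b = 0 :=
    transferRatio_eq_zero_of_not_arcOf fun h => hF.notMem_sink_of_arcOf hST h hu
  simp only [chainX_eq_redistribute, redistribute, hout, Finset.sum_const_zero, sub_zero,
    one_mul]
  gcongr with a
  · exact hxy u v
  · exact (mul_le_mul_of_nonneg_left (hxy a v) (hF.transferRatio_nonneg (hy0 a))).trans
      hF.transferRatio_mul_le_fF

theorem chainX_le_of_notMem (hfeas : LPFeasible G L k δ x y) (hF : IsYFlow L y ↑S ↑T F)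
    (hST : Disjoint S T) (hacyc : AcyclicFlow F) (huS : u ∉ S) (huT : u ∉ T) :
    chainX L F x y u v ≤ y u := by
  obtain ⟨hx0, hy0, -, hxy, -, hsum, -⟩ := hfeas
  rw [chainX_eq_redistribute]
  refine (redistribute_le_add (fun _ => hF.transferRatio_nonneg (hy0 u)) (hx0 u v)).trans ?_
  by_cases hin : ∃ a, ArcOf F a u
  · obtain ⟨a, ha⟩ := hin
    rw [hF.y_eq_one_of_arcOf ha huS huT, ← hsum v, ← Finset.sum_erase _ (by
        rw [transferRatio_eq_zero_of_not_arcOf (hacyc.not_arcOf_self u), zero_mul]),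
      ← Finset.add_sum_erase _ (x · v) (Finset.mem_univ u)]
    gcongr with a
    exact mul_le_of_le_one_left (hx0 a v) ((Finset.single_le_sum (f := transferRatio L F y a)
      (fun _ _ => hF.transferRatio_nonneg (hy0 a)) (Finset.mem_univ u)).trans
      (hF.sum_transferRatio_le_one hST hacyc (hy0 a)))
  · push Not at hin
    simpa [transferRatio_eq_zero_of_not_arcOf (hin _)] using hxy u v

theorem chainX_le_chainY (hfeas : LPFeasible G L k δ x y) (hF : IsYFlow L y ↑S ↑T F)
    (hST : Disjoint S T) (hacyc : AcyclicFlow F) (u v : V) :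
    chainX L F x y u v ≤ chainY F y S T u := by
  by_cases huS : u ∈ S
  · rw [chainY_of_mem_source huS]
    exact hfeas.chainX_le_of_mem_source hF hST hacyc huS
  by_cases huT : u ∈ T
  · rw [chainY_of_mem_sink hST huT]
    exact hfeas.chainX_le_of_mem_sink hF hST huT
  · rw [chainY_of_notMem huS huT]
    exact hfeas.chainX_le_of_notMem hF hST hacyc huS huT

theorem sum_chainX_right_le (hfeas : LPFeasible G L k δ x y) (hF : IsYFlow L y ↑S ↑T F)
    (hST : Disjoint S T) (hacyc : AcyclicFlow F) (u : V) :
    ∑ v, chainX L F x y u v ≤ L u * y u - ∑ b, flF L F u b + ∑ a, flF L F a u := by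
  obtain ⟨-, hy0, -, -, hcap, -⟩ := hfeas
  have hkeep : (1 - ∑ b, transferRatio L F y u b) * ∑ v, x u v ≤
      (1 - ∑ b, transferRatio L F y u b) * (L u * y u) :=
    mul_le_mul_of_nonneg_left (hcap u)
      (sub_nonneg.2 (hF.sum_transferRatio_le_one hST hacyc (hy0 u)))
  have hgain : ∑ a, transferRatio L F y a u * ∑ v, x a v ≤ ∑ a, flF L F a u :=
    Finset.sum_le_sum fun a _ =>
      (mul_le_mul_of_nonneg_left (hcap a) (hF.transferRatio_nonneg (hy0 a))).trans_eq
        (hF.transferRatio_mul hST hacyc (hy0 a))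
  rw [chainX_eq_redistribute, sum_redistribute_right,
    ← hF.sum_transferRatio_mul hST hacyc (hy0 u)]
  linarith

theorem sum_chainX_right_le_mul_chainY (hfeas : LPFeasible G L k δ x y)
    (hF : IsYFlow L y ↑S ↑T F) (hST : Disjoint S T) (hacyc : AcyclicFlow F) (u : V) :
    ∑ v, chainX L F x y u v ≤ L u * chainY F y S T u := by
  refine (hfeas.sum_chainX_right_le hF hST hacyc u).trans ?_
  by_cases huS : u ∈ S
  · have hin (a : V) : flF L F a u = 0 :=
      arcWeight_eq_zero_of_not_arcOf fun h => hF.notMem_source_of_arcOf hST h huS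
    simp [hin, chainY_of_mem_source huS, mul_sub, Finset.mul_sum,
      hF.flF_eq_mul_fF_of_mem_source huS]
  by_cases huT : u ∈ T
  · have hout (b : V) : flF L F u b = 0 :=
      arcWeight_eq_zero_of_not_arcOf fun h => hF.notMem_sink_of_arcOf hST h huT
    simp only [hout, Finset.sum_const_zero, sub_zero, chainY_of_mem_sink hST huT, mul_add,
      Finset.mul_sum]
    gcongr with a
    exact hF.flF_le_mul_fF_right
  · rw [chainY_of_notMem huS huT, hF.sum_flF_left_eq_right hacyc huS huT, sub_add_cancel]

theorem pos_or_exists_arcOf_of_chainX_pos (hfeas : LPFeasible G L k δ x y)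
    (hF : IsYFlow L y ↑S ↑T F) (h : 0 < chainX L F x y u v) :
    0 < x u v ∨ ∃ a, ArcOf F a u ∧ 0 < x a v := by
  obtain ⟨hx0, hy0, -⟩ := hfeas
  rw [chainX_eq_redistribute] at h
  obtain h | ⟨a, ha, hxa⟩ := pos_or_exists_of_redistribute_pos
    (fun a => hF.transferRatio_nonneg (hy0 a)) (fun a => hx0 a v) h
  exacts [.inl h, .inr ⟨a, arcOf_of_transferRatio_pos ha, hxa⟩]

theorem dist_le_of_chainX_pos (hfeas : LPFeasible G L k δ x y) (hG : G.Connected)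
    (hF : IsYFlow L y ↑S ↑T F) (hd : ∀ a b, ArcOf F a b → G.dist a b ≤ d)
    (h : 0 < chainX L F x y u v) : G.dist u v ≤ δ + d := by
  obtain h | ⟨a, ha, hxa⟩ := hfeas.pos_or_exists_arcOf_of_chainX_pos hF h
  · exact (hfeas.dist_le_of_pos h).trans (Nat.le_add_right δ d)
  calc G.dist u v ≤ G.dist u a + G.dist a v := hG.dist_triangle
    _ ≤ δ + d := by
      rw [SimpleGraph.dist_comm]
      linarith [hd a u ha, hfeas.dist_le_of_pos hxa]

theorem lpRadius_chainX_le_of_forall_not_arcOf (hfeas : LPFeasible G L k δ x y)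
    (hF : IsYFlow L y ↑S ↑T F) (hv : ∀ a, ¬ ArcOf F a v) :
    lpRadius G (chainX L F x y) v ≤ lpRadius G x v :=
  lpRadius_le fun _ hw => match hfeas.pos_or_exists_arcOf_of_chainX_pos hF hw with
    | .inl h => dist_le_lpRadius h
    | .inr ⟨a, ha, _⟩ => absurd ha (hv a)

theorem lpRadius_chainX_le (hfeas : LPFeasible G L k δ x y) (hG : G.Connected)
    (hF : IsYFlow L y ↑S ↑T F) : lpRadius G (chainX L F x y) v ≤
      max (lpRadius G x v)
        (sSup {n : ℕ | ∃ a, ArcOf F a v ∧ n = lpRadius G x a + G.dist a v}) := by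
  refine lpRadius_le fun w hw => ?_
  obtain h | ⟨a, ha, hxa⟩ := hfeas.pos_or_exists_arcOf_of_chainX_pos hF hw
  · exact le_max_of_le_left (dist_le_lpRadius h)
  have hbdd : BddAbove {n : ℕ | ∃ a, ArcOf F a v ∧ n = lpRadius G x a + G.dist a v} :=
    ((Set.finite_range fun a => lpRadius G x a + G.dist a v).subset
      (by rintro _ ⟨a, -, rfl⟩; exact ⟨a, rfl⟩)).bddAbove
  refine le_max_of_le_right (le_csSup_of_le hbdd ⟨a, ha, rfl⟩ ?_)
  calc G.dist v w ≤ G.dist v a + G.dist a w := hG.dist_triangle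
    _ ≤ lpRadius G x a + G.dist a v := by
      rw [SimpleGraph.dist_comm (u := v)]
      linarith [dist_le_lpRadius (G := G) hxa]

theorem chainShift (hfeas : LPFeasible G L k δ x y) (hG : G.Connected) (hST : Disjoint S T)
    (hF : IsYFlow L y ↑S ↑T F) (hacyc : AcyclicFlow F)
    (hd : ∀ a b, ArcOf F a b → G.dist a b ≤ d) :
    LPFeasible G L k (δ + d) (chainX L F x y) (chainY F y S T) := by
  have ⟨hx0, hy0, hyk, _, _, hsum, hy1, _⟩ := hfeas
  have hx'0 (u v : V) : 0 ≤ chainX L F x y u v := by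
    rw [chainX_eq_redistribute]
    exact redistribute_nonneg (fun a => hF.transferRatio_nonneg (hy0 a))
      (hF.sum_transferRatio_le_one hST hacyc (hy0 u)) (fun a => hx0 a v)
  refine ⟨hx'0, fun u => hF.chainY_nonneg hST hacyc (hy0 u),
    by rw [hF.sum_chainY hST hacyc, hyk], hfeas.chainX_le_chainY hF hST hacyc,
    hfeas.sum_chainX_right_le_mul_chainY hF hST hacyc,
    fun v => by rw [chainX_eq_redistribute, sum_redistribute_left, hsum],
    fun u => hF.chainY_le_one hST hacyc (hy1 u), fun u v h => ?_⟩
  exact le_antisymm (not_lt.1 fun hpos =>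
    h ⟨hG.preconnected u v, hfeas.dist_le_of_chainX_pos hG hF hd hpos⟩) (hx'0 u v)

end LPFeasible

theorem chain_shifting_lemma_general {V : Type} [Fintype V] [DecidableEq V] (G : SimpleGraph V)
    (hG : G.Connected) (L : V → ℕ) (k δ : ℕ)
    (x : V → V → ℝ) (y : V → ℝ) (hfeas : LPFeasible G L k δ x y)
    (S T : Finset V) (hST : Disjoint S T)
    (F : Finset (ℝ × List V)) (hF : IsYFlow L y ↑S ↑T F) (hacyc : AcyclicFlow F)
    (d : ℕ) (hd : ∀ u v, ArcOf F u v → G.dist u v ≤ d) :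
    LPFeasible G L k (δ + d) (chainX L F x y) (chainY F y S T) ∧
    (∀ v : V, (∀ a, ¬ ArcOf F a v) →
      lpRadius G (chainX L F x y) v ≤ lpRadius G x v) ∧
    (∀ v : V, lpRadius G (chainX L F x y) v ≤
      max (lpRadius G x v)
        (sSup {n : ℕ | ∃ a, ArcOf F a v ∧ n = lpRadius G x a + G.dist a v})) ∧
    (∀ v : V, v ∉ S → v ∉ T → chainY F y S T v = y v) :=
  ⟨hfeas.chainShift hG hST hF hacyc hd,
    fun _ hv => hfeas.lpRadius_chainX_le_of_forall_not_arcOf hF hv,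
    fun _ => hfeas.lpRadius_chainX_le hG hF,
    fun _ => chainY_of_notMem⟩

/-- **Lemma 3, chain shifting.** Let `(x', y')` be the result of the chain
shifting operation on a `δ`-feasible assignment `(x, y)` according to an acyclic `y`-flow
`F` from `S` to `T`, and let `d` be the greatest distance in `G` between two vertices
joined by an arc of `G_F`.  Then `(x', y')` is `(δ + d)`-feasible; every vertex of
indegree zero in `G_F` has `radius_{(x',y')}(v) ≤ radius_{(x,y)}(v)`; every vertex
satisfies `radius_{(x',y')}(v) ≤ max (radius_{(x,y)}(v))
(max_{a ∈ N^in(v)} (radius_{(x,y)}(a) + dist_G(a, v)))`; and `y' v = y v` for every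
`v ∈ V ∖ (S ∪ T)`. -/
theorem chain_shifting_lemma {V : Type} [Fintype V] [DecidableEq V] (G : SimpleGraph V)
    (hG : G.Connected) (L : V → ℕ) (k δ : ℕ) (hδ : 0 < δ)
    (x : V → V → ℝ) (y : V → ℝ) (hfeas : LPFeasible G L k δ x y)
    (S T : Finset V) (hST : Disjoint S T)
    (F : Finset (ℝ × List V)) (hF : IsYFlow L y ↑S ↑T F) (hacyc : AcyclicFlow F)
    (d : ℕ) (hd : ∀ u v, ArcOf F u v → G.dist u v ≤ d) :
    LPFeasible G L k (δ + d) (chainX L F x y) (chainY F y S T) ∧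
    (∀ v : V, (∀ a, ¬ ArcOf F a v) →
      lpRadius G (chainX L F x y) v ≤ lpRadius G x v) ∧
    (∀ v : V, lpRadius G (chainX L F x y) v ≤
      max (lpRadius G x v)
        (sSup {n : ℕ | ∃ a, ArcOf F a v ∧ n = lpRadius G x a + G.dist a v})) ∧
    (∀ v : V, v ∉ S → v ∉ T → chainY F y S T v = y v) :=
  chain_shifting_lemma_general G hG L k δ x y hfeas S T hST F hF hacyc d hd
end
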